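/- arXiv:2205.00762 — 9 statements merged into one kernel-verified Lean document; each statement's English description precedes it below -/
import Mathlib

section
/- If B is a CNF formula of minimal size among all CNF formulae equivalent to the CNF formula A, then every clause of B belongs to the resolution closure of A, i.e., B ⊆ ResCn(A). -/
/-- A literal is a propositional variable (indexed by ℕ) with a sign. -/
abbrev Lit : Type := ℕ × Bool

/-- The complementary literal. -/
def negLit (l : Lit) : Lit := (l.1, !l.2)

/-- A clause is a finite set of literals. -/
abbrev Clause : Type := Finset Lit

/-- A clause is non-tautological: it contains no literal together with its complement. -/
def NonTauto (c : Clause) : Prop := ∀ l ∈ c, negLit l ∉ c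

/-- A CNF formula is a finite set of non-tautological clauses. -/
def IsCNF (F : Finset Clause) : Prop := ∀ c ∈ F, NonTauto c

/-- `Resolvent C D E`: the clauses `C = c₁ ∪ {x}` and `D = c₂ ∪ {¬x}` resolve on the
variable `x` into `E = c₁ ∪ c₂`, all three clauses being non-tautological. -/
def Resolvent (C D E : Clause) : Prop :=
  ∃ (x : ℕ) (c₁ c₂ : Clause),
    (x, true) ∉ c₁ ∧ (x, false) ∉ c₂ ∧
    NonTauto (insert (x, true) c₁) ∧ NonTauto (insert (x, false) c₂) ∧
    NonTauto (c₁ ∪ c₂) ∧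
    C = insert (x, true) c₁ ∧ D = insert (x, false) c₂ ∧ E = c₁ ∪ c₂

/-- The resolution closure of a formula: the smallest set of clauses containing `F`
and closed under resolution. -/
inductive ResCn (F : Finset Clause) : Clause → Prop
  | base {c : Clause} : c ∈ F → ResCn F c
  | step {C D E : Clause} : ResCn F C → ResCn F D → Resolvent C D E → ResCn F E

/-- A valuation satisfies a clause if it makes some literal of it true. -/
def satClause (v : ℕ → Bool) (c : Clause) : Prop := ∃ l ∈ c, v l.1 = l.2

/-- A valuation satisfies a set of clauses if it satisfies every clause in it. -/
def satSet (v : ℕ → Bool) (G : Set Clause) : Prop := ∀ c ∈ G, satClause v c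

/-- A set of clauses entails a clause: every valuation satisfying the set satisfies
the clause. -/
def entailsC (G : Set Clause) (c : Clause) : Prop :=
  ∀ v : ℕ → Bool, satSet v G → satClause v c

/-- A formula entails a formula. -/
def entailsF (F G : Finset Clause) : Prop :=
  ∀ v : ℕ → Bool, satSet v (↑F : Set Clause) → satSet v (↑G : Set Clause)

/-- Two formulae are equivalent if they are satisfied by the same valuations. -/
def equivF (F G : Finset Clause) : Prop :=
  ∀ v : ℕ → Bool, satSet v (↑F : Set Clause) ↔ satSet v (↑G : Set Clause)

/-- A clause `c` of `F` is superredundant in `F` if `ResCn(F) \ {c} ⊨ c`. -/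
def SuperRedundant (F : Finset Clause) (c : Clause) : Prop :=
  entailsC ({d | ResCn F d} \ {c}) c

/-- The size of a formula: the total number of literal occurrences in it. -/
def size (F : Finset Clause) : ℕ := ∑ c ∈ F, c.card

/-- The set of variables occurring (positively or negatively) in a formula. -/
def varsF (F : Finset Clause) : Set ℕ := {n | ∃ c ∈ F, ∃ b : Bool, (n, b) ∈ c}


section Aux

/-- The set of variables of a clause. -/
def cvars (c : Clause) : Finset ℕ := c.image Prod.fst

lemma mem_cvars {c : Clause} {x : ℕ} : x ∈ cvars c ↔ ∃ b, (x, b) ∈ c := by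
  constructor
  · intro h
    rcases Finset.mem_image.1 h with ⟨⟨y, b⟩, hm, he⟩
    obtain rfl : y = x := he
    exact ⟨b, hm⟩
  · rintro ⟨b, h⟩
    exact Finset.mem_image.2 ⟨(x, b), h, rfl⟩

/-- The set of variables of a formula. -/
def fvars (F : Finset Clause) : Finset ℕ := F.sup cvars

lemma nonTauto_mono {c d : Clause} (h : c ⊆ d) (hd : NonTauto d) : NonTauto c :=
  fun l hl hneg => hd l (h hl) (h hneg)

lemma nonTauto_insert {c : Clause} {x : ℕ} {b : Bool} (hc : NonTauto c)
    (hx : x ∉ cvars c) : NonTauto (insert (x, b) c) := by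
  intro l hl hneg
  rcases Finset.mem_insert.1 hl with rfl | hl
  · rcases Finset.mem_insert.1 hneg with he | hneg
    · simp [negLit, Prod.ext_iff] at he
    · exact hx (mem_cvars.2 ⟨!b, hneg⟩)
  · rcases Finset.mem_insert.1 hneg with he | hneg
    · have : l.1 = x := by
        have := congrArg Prod.fst he
        simpa [negLit] using this
      exact hx (mem_cvars.2 ⟨l.2, by simpa [← this] using hl⟩)
    · exact hc l hl hneg

lemma satClause_mono {v : ℕ → Bool} {c d : Clause} (h : c ⊆ d) :
    satClause v c → satClause v d := fun ⟨l, hl, hv⟩ => ⟨l, h hl, hv⟩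

/-- Soundness of resolution. -/
lemma resCn_sound {F : Finset Clause} {c : Clause} (h : ResCn F c) :
    ∀ v : ℕ → Bool, satSet v (↑F : Set Clause) → satClause v c := by
  induction h with
  | base hc => exact fun v hv => hv _ (by exact_mod_cast hc)
  | step hC hD hR ihC ihD =>
    intro v hv
    obtain ⟨x, c₁, c₂, _, _, _, _, _, rfl, rfl, rfl⟩ := hR
    rcases ihC v hv with ⟨l, hl, hvl⟩
    rcases Finset.mem_insert.1 hl with rfl | hl
    · rcases ihD v hv with ⟨m, hm, hvm⟩
      rcases Finset.mem_insert.1 hm with rfl | hm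
      · simp_all
      · exact ⟨m, Finset.mem_union_right _ hm, hvm⟩
    · exact ⟨l, Finset.mem_union_left _ hl, hvl⟩

/-- Restriction of a formula under the assignment `x := b`. -/
def restr (F : Finset Clause) (x : ℕ) (b : Bool) : Finset Clause :=
  (F.filter (fun d => (x, b) ∉ d)).image (fun d => d.erase (x, !b))

lemma restr_no_x {F : Finset Clause} {x : ℕ} {b : Bool} :
    ∀ e ∈ restr F x b, ∀ bb : Bool, (x, bb) ∉ e := by
  intro e he bb hmem
  rcases Finset.mem_image.1 he with ⟨d, hd, rfl⟩
  rcases Finset.mem_filter.1 hd with ⟨_, hxb⟩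
  have h1 : (x, bb) ≠ (x, !b) := (Finset.mem_erase.1 hmem).1
  have h2 : (x, bb) ∈ d := (Finset.mem_erase.1 hmem).2
  have : bb = b := by
    cases bb <;> cases b <;> simp_all
  exact hxb (this ▸ h2)

lemma resCn_no_x {G : Finset Clause} {x : ℕ}
    (hG : ∀ e ∈ G, ∀ bb : Bool, (x, bb) ∉ e) :
    ∀ {e : Clause}, ResCn G e → ∀ bb : Bool, (x, bb) ∉ e := by
  intro e h
  induction h with
  | base hc => exact hG _ hc
  | step hC hD hR ihC ihD =>
    obtain ⟨y, c₁, c₂, _, _, _, _, _, rfl, rfl, rfl⟩ := hR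
    intro bb hmem
    rcases Finset.mem_union.1 hmem with h | h
    · exact ihC bb (Finset.mem_insert_of_mem h)
    · exact ihD bb (Finset.mem_insert_of_mem h)

lemma notmem_cvars {c : Clause} {x : ℕ} (h : ∀ bb : Bool, (x, bb) ∉ c) :
    x ∉ cvars c := fun hx => by rcases mem_cvars.1 hx with ⟨b, hb⟩; exact h b hb

/-- Lifting lemma: derivations from the restricted formula lift to derivations
from `F`, up to adding back the literal `(x, !b)`. -/
lemma lift {F : Finset Clause} {x : ℕ} {b : Bool} :
    ∀ {e : Clause}, ResCn (restr F x b) e →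
      ∃ e' : Clause, ResCn F e' ∧ e' ⊆ insert (x, !b) e := by
  intro e h
  induction h with
  | base hc =>
    rcases Finset.mem_image.1 hc with ⟨d, hd, rfl⟩
    refine ⟨d, ResCn.base (Finset.mem_filter.1 hd).1, ?_⟩
    intro l hl
    by_cases he : l = (x, !b)
    · exact he ▸ Finset.mem_insert_self _ _
    · exact Finset.mem_insert_of_mem (Finset.mem_erase.2 ⟨he, hl⟩)
  | @step C D E hC hD hR ihC ihD =>
    obtain ⟨y, c₁, c₂, hy1, hy2, hntC, hntD, hntE, rfl, rfl, rfl⟩ := hR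
    rcases ihC with ⟨C', hC', hCsub⟩
    rcases ihD with ⟨D', hD', hDsub⟩
    have hxC : x ∉ cvars (insert (y, true) c₁) := notmem_cvars (resCn_no_x restr_no_x hC)
    have hxD : x ∉ cvars (insert (y, false) c₂) := notmem_cvars (resCn_no_x restr_no_x hD)
    have hxE : x ∉ cvars (c₁ ∪ c₂) := by
      intro hx
      rcases mem_cvars.1 hx with ⟨bb, hbb⟩
      rcases Finset.mem_union.1 hbb with h | h
      · exact hxC (mem_cvars.2 ⟨bb, Finset.mem_insert_of_mem h⟩)
      · exact hxD (mem_cvars.2 ⟨bb, Finset.mem_insert_of_mem h⟩)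
    by_cases h1 : (y, true) ∈ C'
    · by_cases h2 : (y, false) ∈ D'
      · -- resolve C' and D' on y
        set a₁ := C'.erase (y, true) with ha₁
        set a₂ := D'.erase (y, false) with ha₂
        have ha₁sub : a₁ ⊆ insert (x, !b) c₁ := by
          intro l hl
          have hlC : l ∈ C' := Finset.mem_of_mem_erase hl
          have hlne : l ≠ (y, true) := (Finset.mem_erase.1 hl).1
          rcases Finset.mem_insert.1 (hCsub hlC) with rfl | hl'
          · exact Finset.mem_insert_self _ _
          · rcases Finset.mem_insert.1 hl' with rfl | hl''
            · exact absurd rfl hlne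
            · exact Finset.mem_insert_of_mem hl''
        have ha₂sub : a₂ ⊆ insert (x, !b) c₂ := by
          intro l hl
          have hlD : l ∈ D' := Finset.mem_of_mem_erase hl
          have hlne : l ≠ (y, false) := (Finset.mem_erase.1 hl).1
          rcases Finset.mem_insert.1 (hDsub hlD) with rfl | hl'
          · exact Finset.mem_insert_self _ _
          · rcases Finset.mem_insert.1 hl' with rfl | hl''
            · exact absurd rfl hlne
            · exact Finset.mem_insert_of_mem hl''
        have hCeq : C' = insert (y, true) a₁ := (Finset.insert_erase h1).symm
        have hDeq : D' = insert (y, false) a₂ := (Finset.insert_erase h2).symm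
        have hntC' : NonTauto (insert (y, true) a₁) := by
          apply nonTauto_mono (d := insert (x, !b) (insert (y, true) c₁))
          · intro l hl
            rcases Finset.mem_insert.1 hl with rfl | hl
            · exact Finset.mem_insert_of_mem (Finset.mem_insert_self _ _)
            · rcases Finset.mem_insert.1 (ha₁sub hl) with rfl | hl'
              · exact Finset.mem_insert_self _ _
              · exact Finset.mem_insert_of_mem (Finset.mem_insert_of_mem hl')
          · exact nonTauto_insert hntC hxC
        have hntD' : NonTauto (insert (y, false) a₂) := by
          apply nonTauto_mono (d := insert (x, !b) (insert (y, false) c₂))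
          · intro l hl
            rcases Finset.mem_insert.1 hl with rfl | hl
            · exact Finset.mem_insert_of_mem (Finset.mem_insert_self _ _)
            · rcases Finset.mem_insert.1 (ha₂sub hl) with rfl | hl'
              · exact Finset.mem_insert_self _ _
              · exact Finset.mem_insert_of_mem (Finset.mem_insert_of_mem hl')
          · exact nonTauto_insert hntD hxD
        have hntE' : NonTauto (a₁ ∪ a₂) := by
          apply nonTauto_mono (d := insert (x, !b) (c₁ ∪ c₂))
          · intro l hl
            rcases Finset.mem_union.1 hl with h | h
            · rcases Finset.mem_insert.1 (ha₁sub h) with rfl | h'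
              · exact Finset.mem_insert_self _ _
              · exact Finset.mem_insert_of_mem (Finset.mem_union_left _ h')
            · rcases Finset.mem_insert.1 (ha₂sub h) with rfl | h'
              · exact Finset.mem_insert_self _ _
              · exact Finset.mem_insert_of_mem (Finset.mem_union_right _ h')
          · exact nonTauto_insert hntE hxE
        refine ⟨a₁ ∪ a₂, ResCn.step hC' hD' ⟨y, a₁, a₂,
          Finset.notMem_erase _ _, Finset.notMem_erase _ _,
          hntC', hntD', hntE', hCeq, hDeq, rfl⟩, ?_⟩
        intro l hl
        rcases Finset.mem_union.1 hl with h | h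
        · rcases Finset.mem_insert.1 (ha₁sub h) with rfl | h'
          · exact Finset.mem_insert_self _ _
          · exact Finset.mem_insert_of_mem (Finset.mem_union_left _ h')
        · rcases Finset.mem_insert.1 (ha₂sub h) with rfl | h'
          · exact Finset.mem_insert_self _ _
          · exact Finset.mem_insert_of_mem (Finset.mem_union_right _ h')
      · -- D' has no pivot: D' already subsumes
        refine ⟨D', hD', ?_⟩
        intro l hl
        rcases Finset.mem_insert.1 (hDsub hl) with rfl | hl'
        · exact Finset.mem_insert_self _ _
        · rcases Finset.mem_insert.1 hl' with rfl | hl''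
          · exact absurd hl h2
          · exact Finset.mem_insert_of_mem (Finset.mem_union_right _ hl'')
    · refine ⟨C', hC', ?_⟩
      intro l hl
      rcases Finset.mem_insert.1 (hCsub hl) with rfl | hl'
      · exact Finset.mem_insert_self _ _
      · rcases Finset.mem_insert.1 hl' with rfl | hl''
        · exact absurd hl h1
        · exact Finset.mem_insert_of_mem (Finset.mem_union_left _ hl'')

/-- Semantic restriction: entailment passes to the restricted formula. -/
lemma entails_restr {F : Finset Clause} {c : Clause} {x : ℕ} {b : Bool}
    (hx : x ∉ cvars c)
    (hent : ∀ v : ℕ → Bool, satSet v (↑F : Set Clause) → satClause v c) :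
    ∀ v : ℕ → Bool, satSet v (↑(restr F x b) : Set Clause) → satClause v c := by
  intro v hv
  set v' : ℕ → Bool := Function.update v x b with hv'
  have hsat : satSet v' (↑F : Set Clause) := by
    intro d hd
    have hd' : d ∈ F := by exact_mod_cast hd
    by_cases hxb : (x, b) ∈ d
    · exact ⟨(x, b), hxb, by simp [hv']⟩
    · have hmem : d.erase (x, !b) ∈ restr F x b :=
        Finset.mem_image.2 ⟨d, Finset.mem_filter.2 ⟨hd', hxb⟩, rfl⟩
      rcases hv _ (by exact_mod_cast hmem) with ⟨l, hl, hvl⟩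
      have hlx : l.1 ≠ x := by
        intro h
        have hne : l ≠ (x, !b) := (Finset.mem_erase.1 hl).1
        have hld : l ∈ d := Finset.mem_of_mem_erase hl
        have : l.2 = b := by
          rcases Bool.eq_or_eq_not l.2 b with h2 | h2
          · exact h2
          · exact absurd (Prod.ext h h2) hne
        exact hxb (by rw [← h, ← this]; exact hld)
      exact ⟨l, Finset.mem_of_mem_erase hl, by simp [hv', Function.update_of_ne hlx, hvl]⟩
  rcases hent v' hsat with ⟨l, hl, hvl⟩
  have hlx : l.1 ≠ x := fun h => hx (mem_cvars.2 ⟨l.2, by rw [← h]; exact hl⟩)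
  exact ⟨l, hl, by simpa [hv', Function.update_of_ne hlx] using hvl⟩

/-- Base case: if all variables of `F` occur in `c`, some clause of `F` subsumes `c`. -/
lemma subsume_of_vars_subset {F : Finset Clause} {c : Clause}
    (hsub : fvars F ⊆ cvars c) (hnt : NonTauto c)
    (hent : ∀ v : ℕ → Bool, satSet v (↑F : Set Clause) → satClause v c) :
    ∃ d ∈ F, d ⊆ c := by
  by_contra hno
  push_neg at hno
  set v : ℕ → Bool := fun x => decide ((x, false) ∈ c) with hv
  have hfalse : ∀ l ∈ c, v l.1 = !l.2 := by
    intro l hl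
    cases hb : l.2
    · simp [hv, show (l.1, false) ∈ c from by rw [← hb]; exact hl]
    · have : (l.1, false) ∉ c := by
        have := hnt l hl
        simpa [negLit, hb] using this
      simp [hv, this]
  have hsat : satSet v (↑F : Set Clause) := by
    intro d hd
    have hd' : d ∈ F := by exact_mod_cast hd
    rcases Finset.not_subset.1 (hno d hd') with ⟨l, hld, hlc⟩
    have hlv : l.1 ∈ cvars c := hsub (Finset.mem_sup.2 ⟨d, hd', mem_cvars.2 ⟨l.2, hld⟩⟩)
    rcases mem_cvars.1 hlv with ⟨bb, hbb⟩
    have hbne : bb = !l.2 := by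
      rcases Bool.eq_or_eq_not bb l.2 with h | h
      · exact absurd (by rw [← h]; exact hbb : (l.1, l.2) ∈ c) (by simpa using hlc)
      · exact h
    exact ⟨l, hld, by
      have := hfalse (l.1, bb) hbb
      simp only [hbne] at this
      simpa using this⟩
  rcases hent v hsat with ⟨l, hl, hvl⟩
  have := hfalse l hl
  rw [hvl] at this
  exact absurd this (by simp)

/-- Completeness of resolution with subsumption. -/
lemma resolution_complete :
    ∀ (n : ℕ) (F : Finset Clause) (c : Clause),
      (fvars F \ cvars c).card ≤ n → NonTauto c →
      (∀ v : ℕ → Bool, satSet v (↑F : Set Clause) → satClause v c) →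
      ∃ c' : Clause, ResCn F c' ∧ c' ⊆ c := by
  intro n
  induction n with
  | zero =>
    intro F c hcard hnt hent
    have hsub : fvars F ⊆ cvars c := by
      intro y hy
      by_contra hyc
      have : y ∈ fvars F \ cvars c := Finset.mem_sdiff.2 ⟨hy, hyc⟩
      simp [Finset.card_eq_zero.1 (Nat.le_zero.1 hcard)] at this
    rcases subsume_of_vars_subset hsub hnt hent with ⟨d, hd, hdc⟩
    exact ⟨d, ResCn.base hd, hdc⟩
  | succ n ih =>
    intro F c hcard hnt hent
    by_cases hemp : fvars F \ cvars c = ∅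
    · have hsub : fvars F ⊆ cvars c := by
        intro y hy
        by_contra hyc
        have : y ∈ fvars F \ cvars c := Finset.mem_sdiff.2 ⟨hy, hyc⟩
        simp [hemp] at this
      rcases subsume_of_vars_subset hsub hnt hent with ⟨d, hd, hdc⟩
      exact ⟨d, ResCn.base hd, hdc⟩
    · rcases Finset.nonempty_iff_ne_empty.2 hemp with ⟨x, hx⟩
      have hxF : x ∈ fvars F := (Finset.mem_sdiff.1 hx).1
      have hxc : x ∉ cvars c := (Finset.mem_sdiff.1 hx).2
      have hrestr_card : ∀ b : Bool, (fvars (restr F x b) \ cvars c).card ≤ n := by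
        intro b
        have hss : fvars (restr F x b) \ cvars c ⊆ (fvars F \ cvars c).erase x := by
          intro y hy
          rcases Finset.mem_sdiff.1 hy with ⟨hyF, hyc⟩
          rcases Finset.mem_sup.1 hyF with ⟨e, he, hye⟩
          rcases mem_cvars.1 hye with ⟨bb, hbb⟩
          have hyx : y ≠ x := by
            rintro rfl
            exact restr_no_x e he bb hbb
          rcases Finset.mem_image.1 he with ⟨d, hd, rfl⟩
          have hdF : d ∈ F := (Finset.mem_filter.1 hd).1
          have : y ∈ fvars F :=
            Finset.mem_sup.2 ⟨d, hdF, mem_cvars.2 ⟨bb, Finset.mem_of_mem_erase hbb⟩⟩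
          exact Finset.mem_erase.2 ⟨hyx, Finset.mem_sdiff.2 ⟨this, hyc⟩⟩
        calc (fvars (restr F x b) \ cvars c).card
            ≤ ((fvars F \ cvars c).erase x).card := Finset.card_le_card hss
          _ = (fvars F \ cvars c).card - 1 := Finset.card_erase_of_mem hx
          _ ≤ n := by omega
      have h1 := ih (restr F x true) c (hrestr_card true) hnt
        (entails_restr hxc hent)
      have h0 := ih (restr F x false) c (hrestr_card false) hnt
        (entails_restr hxc hent)
      rcases h1 with ⟨c₁, hc₁, hc₁sub⟩
      rcases h0 with ⟨c₀, hc₀, hc₀sub⟩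
      rcases lift hc₁ with ⟨e₁, he₁, he₁sub⟩
      rcases lift hc₀ with ⟨e₀, he₀, he₀sub⟩
      -- e₁ ⊆ insert (x, false) c, e₀ ⊆ insert (x, true) c
      have he₁sub' : e₁ ⊆ insert (x, false) c := by
        intro l hl
        rcases Finset.mem_insert.1 (he₁sub hl) with rfl | hl'
        · exact Finset.mem_insert_self _ _
        · exact Finset.mem_insert_of_mem (hc₁sub hl')
      have he₀sub' : e₀ ⊆ insert (x, true) c := by
        intro l hl
        rcases Finset.mem_insert.1 (he₀sub hl) with rfl | hl'
        · exact Finset.mem_insert_self _ _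
        · exact Finset.mem_insert_of_mem (hc₀sub hl')
      by_cases h1m : (x, false) ∈ e₁
      · by_cases h0m : (x, true) ∈ e₀
        · -- resolve e₀ and e₁ on x
          set a := e₁.erase (x, false) with ha
          set b' := e₀.erase (x, true) with hb'
          have hasub : a ⊆ c := by
            intro l hl
            have hlne : l ≠ (x, false) := (Finset.mem_erase.1 hl).1
            rcases Finset.mem_insert.1 (he₁sub' (Finset.mem_of_mem_erase hl)) with rfl | h
            · exact absurd rfl hlne
            · exact h
          have hbsub : b' ⊆ c := by
            intro l hl
            have hlne : l ≠ (x, true) := (Finset.mem_erase.1 hl).1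
            rcases Finset.mem_insert.1 (he₀sub' (Finset.mem_of_mem_erase hl)) with rfl | h
            · exact absurd rfl hlne
            · exact h
          have hnta : NonTauto (insert (x, true) b') :=
            nonTauto_insert (nonTauto_mono hbsub hnt)
              (fun h => hxc (mem_cvars.1 h |>.elim fun bb hbb => mem_cvars.2 ⟨bb, hbsub hbb⟩))
          have hntb : NonTauto (insert (x, false) a) :=
            nonTauto_insert (nonTauto_mono hasub hnt)
              (fun h => hxc (mem_cvars.1 h |>.elim fun bb hbb => mem_cvars.2 ⟨bb, hasub hbb⟩))
          have hntu : NonTauto (b' ∪ a) :=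
            nonTauto_mono (Finset.union_subset hbsub hasub) hnt
          have he₀eq : e₀ = insert (x, true) b' := (Finset.insert_erase h0m).symm
          have he₁eq : e₁ = insert (x, false) a := (Finset.insert_erase h1m).symm
          exact ⟨b' ∪ a, ResCn.step he₀ he₁ ⟨x, b', a,
            Finset.notMem_erase _ _, Finset.notMem_erase _ _,
            hnta, hntb, hntu, he₀eq, he₁eq, rfl⟩,
            Finset.union_subset hbsub hasub⟩
        · refine ⟨e₀, he₀, ?_⟩
          intro l hl
          rcases Finset.mem_insert.1 (he₀sub' hl) with rfl | h
          · exact absurd hl h0m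
          · exact h
      · refine ⟨e₁, he₁, ?_⟩
        intro l hl
        rcases Finset.mem_insert.1 (he₁sub' hl) with rfl | h
        · exact absurd hl h1m
        · exact h

end Aux

/-- a CNF formula `B` of minimal size among the CNF formulae equivalent to
`A` is included in the resolution closure of `A`. -/
theorem minimal_subset_resCn
    (A B : Finset Clause) (hA : IsCNF A) (hB : IsCNF B)
    (hequiv : equivF A B)
    (hmin : ∀ B' : Finset Clause, IsCNF B' → equivF A B' → size B ≤ size B') :
    ∀ c ∈ B, ResCn A c := by
  intro c hc
  have hent : ∀ v : ℕ → Bool, satSet v (↑A : Set Clause) → satClause v c :=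
    fun v hv => (hequiv v).1 hv c (by exact_mod_cast hc)
  rcases resolution_complete (fvars A \ cvars c).card A c le_rfl (hB c hc) hent with
    ⟨c', hres, hsub⟩
  by_cases heq : c' = c
  · exact heq ▸ hres
  · exfalso
    have hss : c' ⊂ c := ⟨hsub, fun h => heq (Finset.Subset.antisymm hsub h)⟩
    set B' := insert c' (B.erase c) with hB'def
    have hB' : IsCNF B' := by
      intro d hd
      rcases Finset.mem_insert.1 hd with rfl | hd
      · exact nonTauto_mono hsub (hB c hc)
      · exact hB d (Finset.mem_of_mem_erase hd)
    have hsound : ∀ v : ℕ → Bool, satSet v (↑A : Set Clause) → satClause v c' :=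
      resCn_sound hres
    have hequiv' : equivF A B' := by
      intro v
      constructor
      · intro hv d hd
        rcases Finset.mem_insert.1 (by exact_mod_cast hd : d ∈ B') with rfl | hd'
        · exact hsound v hv
        · exact (hequiv v).1 hv _ (by exact_mod_cast Finset.mem_of_mem_erase hd')
      · intro hv
        apply (hequiv v).2
        intro d hd
        have hdB : d ∈ B := by exact_mod_cast hd
        by_cases hdc : d = c
        · subst hdc
          exact satClause_mono hsub
            (hv c' (by exact_mod_cast (Finset.mem_insert_self _ _ : c' ∈ B')))
        · exact hv d (by exact_mod_cast
            (Finset.mem_insert_of_mem (Finset.mem_erase.2 ⟨hdc, hdB⟩) : d ∈ B'))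
    have h1 : size B = size (B.erase c) + c.card := by
      rw [size, size]; exact (Finset.sum_erase_add B _ hc).symm
    have h2 : size B' ≤ size (B.erase c) + c'.card := by
      by_cases hm : c' ∈ B.erase c
      · rw [hB'def, size, Finset.insert_eq_self.2 hm]
        exact Nat.le_add_right _ _
      · rw [hB'def, size, Finset.sum_insert hm]
        rw [size, Nat.add_comm]
    have h3 : c'.card < c.card := Finset.card_lt_card hss
    have := hmin B' hB' hequiv'
    omega
end

section
/- There exist two equivalent CNF formulae F and F' and a clause c belonging to both, such that c is superredundant in F but superirredundant in F'. (For instance F = {{a}, {¬a, b}, {a, ¬b}} and F' = {{a}, {b}} with a and b distinct variables, and c = {a}.) -/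

instance (c : Clause) : Decidable (NonTauto c) :=
  decidable_of_iff (∀ l ∈ c, negLit l ∉ c) (by rw [NonTauto])

instance (F : Finset Clause) : Decidable (IsCNF F) :=
  decidable_of_iff (∀ c ∈ F, NonTauto c) (by rw [IsCNF])

/-- there exist two equivalent CNF formulae and a common clause that is
superredundant in one but superirredundant in the other. -/
theorem exists_syntax_dependent_superredundancy :
    ∃ (F F' : Finset Clause) (c : Clause),
      IsCNF F ∧ IsCNF F' ∧ equivF F F' ∧ c ∈ F ∧ c ∈ F' ∧
      SuperRedundant F c ∧ ¬ SuperRedundant F' c := by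
  refine ⟨{ {(0,true)}, {(0,false),(1,true)}, {(0,true),(1,false)} },
          { {(0,true)}, {(1,true)} }, {(0,true)}, by decide, by decide, ?_, by decide, by decide, ?_, ?_⟩
  · -- equivalence
    intro v
    constructor
    · intro h d hd
      simp only [Finset.coe_insert, Finset.coe_singleton, Set.mem_insert_iff,
        Set.mem_singleton_iff] at hd
      have h0 : v 0 = true := by
        rcases h {(0,true)} (by simp) with ⟨l, hl, hvl⟩
        simp only [Finset.mem_singleton] at hl
        subst hl; exact hvl
      have h1 : v 1 = true := by
        rcases h {(0,false),(1,true)} (by simp) with ⟨l, hl, hvl⟩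
        simp only [Finset.mem_insert, Finset.mem_singleton] at hl
        rcases hl with rfl | rfl
        · rw [h0] at hvl; exact absurd hvl (by simp)
        · exact hvl
      rcases hd with rfl | rfl
      · exact ⟨(0,true), by simp, h0⟩
      · exact ⟨(1,true), by simp, h1⟩
    · intro h d hd
      simp only [Finset.coe_insert, Finset.coe_singleton, Set.mem_insert_iff,
        Set.mem_singleton_iff] at hd
      have h0 : v 0 = true := by
        rcases h {(0,true)} (by simp) with ⟨l, hl, hvl⟩
        simp only [Finset.mem_singleton] at hl
        subst hl; exact hvl
      have h1 : v 1 = true := by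
        rcases h {(1,true)} (by simp) with ⟨l, hl, hvl⟩
        simp only [Finset.mem_singleton] at hl
        subst hl; exact hvl
      rcases hd with rfl | rfl | rfl
      · exact ⟨(0,true), by simp, h0⟩
      · exact ⟨(1,true), by simp, h1⟩
      · exact ⟨(0,true), by simp, h0⟩
  · -- superredundant in F
    intro v hv
    have hmA : ({(0,true)} : Clause) ∈
        ({ {(0,true)}, {(0,false),(1,true)}, {(0,true),(1,false)} } : Finset Clause) := by decide
    have hmAB : ({(0,false),(1,true)} : Clause) ∈
        ({ {(0,true)}, {(0,false),(1,true)}, {(0,true),(1,false)} } : Finset Clause) := by decide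
    have hmBA : ({(0,true),(1,false)} : Clause) ∈
        ({ {(0,true)}, {(0,false),(1,true)}, {(0,true),(1,false)} } : Finset Clause) := by decide
    have hRes : Resolvent {(0,true)} {(0,false),(1,true)} {(1,true)} := by
      refine ⟨0, ∅, {(1,true)}, by decide, by decide, by decide, by decide, by decide,
        by decide, by decide, by decide⟩
    have hB : ResCn { {(0,true)}, {(0,false),(1,true)}, {(0,true),(1,false)} } {(1,true)} :=
      ResCn.step (ResCn.base hmA) (ResCn.base hmAB) hRes
    have h1 : v 1 = true := by
      rcases hv {(1,true)} ⟨hB, by simp⟩ with ⟨l, hl, hvl⟩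
      simp only [Finset.mem_singleton] at hl
      subst hl; exact hvl
    have h0 : v 0 = true := by
      rcases hv {(0,true),(1,false)} ⟨ResCn.base hmBA, by simp only [Set.mem_singleton_iff]; decide⟩ with ⟨l, hl, hvl⟩
      simp only [Finset.mem_insert, Finset.mem_singleton] at hl
      rcases hl with rfl | rfl
      · exact hvl
      · rw [h1] at hvl; exact absurd hvl (by simp)
    exact ⟨(0,true), by simp, h0⟩
  · -- superirredundant in F'
    intro h
    have hres : ∀ d, ResCn { {(0,true)}, {(1,true)} } d →
        d = {(0,true)} ∨ d = {(1,true)} := by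
      intro d hd
      induction hd with
      | base hc =>
        simpa only [Finset.mem_insert, Finset.mem_singleton] using hc
      | step _ _ hR ihC ihD =>
        rcases hR with ⟨x, c₁, c₂, _, _, _, _, _, _, hD, _⟩
        exfalso
        have hmem : ((x, false) : Lit) ∈ (insert ((x,false):Lit) c₂) := Finset.mem_insert_self _ _
        rw [← hD] at hmem
        rcases ihD with rfl | rfl <;>
          · simp only [Finset.mem_singleton, Prod.mk.injEq] at hmem
            exact Bool.false_ne_true hmem.2
    have hc := h (fun n => n == 1) ?_
    · rcases hc with ⟨l, hl, hvl⟩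
      simp only [Finset.mem_singleton] at hl
      subst hl; simp at hvl
    · intro d hd
      rcases hd with ⟨hd1, hd2⟩
      rcases hres d hd1 with rfl | rfl
      · exact absurd rfl hd2
      · exact ⟨(1,true), by simp, by simp⟩
end

section
/- If every clause of a CNF formula F is superirredundant in F, then F is minimal: no CNF formula equivalent to F has strictly smaller size. -/
def varsC (c : Clause) : Finset ℕ := c.image Prod.fst
def varsFin (F : Finset Clause) : Finset ℕ := F.biUnion varsC

lemma mem_varsC {c : Clause} {n : ℕ} : n ∈ varsC c ↔ ∃ b : Bool, (n, b) ∈ c := by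
  simp only [varsC, Finset.mem_image]
  constructor
  · rintro ⟨⟨m, b⟩, hm, rfl⟩; exact ⟨b, hm⟩
  · rintro ⟨b, hb⟩; exact ⟨(n, b), hb, rfl⟩

lemma resCn_vars {F : Finset Clause} {d : Clause} (h : ResCn F d) :
    varsC d ⊆ varsFin F := by
  induction h with
  | base hc => exact fun n hn => Finset.mem_biUnion.2 ⟨_, hc, hn⟩
  | step hC hD hR ihC ihD =>
    obtain ⟨x, c₁, c₂, _, _, _, _, _, rfl, rfl, rfl⟩ := hR
    intro n hn
    rcases mem_varsC.1 hn with ⟨b, hb⟩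
    rcases Finset.mem_union.1 hb with h1 | h2
    · exact ihC (mem_varsC.2 ⟨b, Finset.mem_insert_of_mem h1⟩)
    · exact ihD (mem_varsC.2 ⟨b, Finset.mem_insert_of_mem h2⟩)

/-- Restriction of F under x := bb : remove satisfied clauses, erase the falsified literal. -/
def restrict (x : ℕ) (bb : Bool) (F : Finset Clause) : Finset Clause :=
  (F.filter (fun c => (x, bb) ∉ c)).image (fun c => c.erase (x, !bb))

lemma mem_restrict {x bb F} {c' : Clause} :
    c' ∈ restrict x bb F ↔ ∃ c ∈ F, (x, bb) ∉ c ∧ c' = c.erase (x, !bb) := by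
  simp only [restrict, Finset.mem_image, Finset.mem_filter]
  constructor
  · rintro ⟨c, ⟨hc, hx⟩, rfl⟩; exact ⟨c, hc, hx, rfl⟩
  · rintro ⟨c, hc, hx, rfl⟩; exact ⟨c, ⟨hc, hx⟩, rfl⟩

lemma restrict_no_x {x bb F} {c' : Clause} (h : c' ∈ restrict x bb F) {b : Bool} :
    (x, b) ∉ c' := by
  rcases mem_restrict.1 h with ⟨c, _, hx, rfl⟩
  intro hmem
  rcases Finset.mem_erase.1 hmem with ⟨hne, hc⟩
  cases b <;> cases bb <;> simp_all

lemma varsFin_restrict {x bb F} : varsFin (restrict x bb F) ⊆ varsFin F := by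
  intro n hn
  rcases Finset.mem_biUnion.1 hn with ⟨c', hc', hn'⟩
  rcases mem_restrict.1 hc' with ⟨c, hc, _, rfl⟩
  rcases mem_varsC.1 hn' with ⟨b, hb⟩
  exact Finset.mem_biUnion.2 ⟨c, hc, mem_varsC.2 ⟨b, Finset.mem_of_mem_erase hb⟩⟩

lemma x_not_varsFin_restrict {x bb F} : x ∉ varsFin (restrict x bb F) := by
  intro hx
  rcases Finset.mem_biUnion.1 hx with ⟨c', hc', hn'⟩
  rcases mem_varsC.1 hn' with ⟨b, hb⟩
  exact restrict_no_x hc' hb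

lemma isCNF_restrict {x bb F} (hF : IsCNF F) : IsCNF (restrict x bb F) := by
  intro c' hc'
  rcases mem_restrict.1 hc' with ⟨c, hc, _, rfl⟩
  exact nonTauto_mono (Finset.erase_subset _ _) (hF c hc)

/-- key tautology helper: adding literals of a fresh variable keeps non-tautology. -/
lemma nonTauto_union_sub {c s : Clause} {x : ℕ} {bb : Bool}
    (hc : NonTauto c) (hx : x ∉ varsC c) (hs : s ⊆ ({(x, bb)} : Clause)) :
    NonTauto (c ∪ s) := by
  intro l hl hneg
  have hxc : ∀ b : Bool, (x, b) ∉ c := fun b hb => hx (mem_varsC.2 ⟨b, hb⟩)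
  rcases Finset.mem_union.1 hl with hl | hl
  · rcases Finset.mem_union.1 hneg with hn | hn
    · exact hc l hl hn
    · have h1 := Finset.mem_singleton.1 (hs hn)
      have h2 : l.1 = x := congrArg Prod.fst h1
      exact hxc l.2 (by rw [← h2]; exact hl)
  · have hle : l = (x, bb) := Finset.mem_singleton.1 (hs hl)
    rcases Finset.mem_union.1 hneg with hn | hn
    · rw [hle] at hn; exact hxc (!bb) hn
    · have := Finset.mem_singleton.1 (hs hn)
      rw [hle] at this
      simp [negLit] at this

lemma restrict_entails {x bb} {F : Finset Clause} {b : Clause}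
    (hxb : x ∉ varsC b) (h : entailsC (↑F) b) :
    entailsC (↑(restrict x bb F)) b := by
  intro v hv
  set v' : ℕ → Bool := Function.update v x bb with hv'
  have hsat : satSet v' (↑F) := by
    intro c hc
    rcases Finset.mem_coe.1 hc with hcF
    by_cases hxc : (x, bb) ∈ c
    · exact ⟨(x, bb), hxc, by simp [hv']⟩
    · have hmem : c.erase (x, !bb) ∈ restrict x bb F := mem_restrict.2 ⟨c, hcF, hxc, rfl⟩
      rcases hv _ (Finset.mem_coe.2 hmem) with ⟨l, hl, hvl⟩
      have hlc := Finset.mem_of_mem_erase hl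
      have hlx : l.1 ≠ x := by
        intro hlx
        have : l = (x, bb) ∨ l = (x, !bb) := by
          rcases l with ⟨n, b'⟩
          cases b' <;> cases bb <;> simp_all
        rcases this with rfl | rfl
        · exact hxc hlc
        · exact (Finset.mem_erase.1 hl).1 rfl
      refine ⟨l, hlc, ?_⟩
      rw [hv', Function.update_of_ne hlx]
      exact hvl
  rcases h v' hsat with ⟨l, hl, hvl⟩
  refine ⟨l, hl, ?_⟩
  have hlx : l.1 ≠ x := fun he => hxb (mem_varsC.2 ⟨l.2, by rw [← he]; exact hl⟩)
  rw [hv', Function.update_of_ne hlx] at hvl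
  exact hvl

/-- Lifting resolution derivations from a restriction back to F. -/
lemma lift_resCn {x bb} {F : Finset Clause} {d : Clause}
    (h : ResCn (restrict x bb F) d) :
    ∃ s : Clause, s ⊆ {(x, !bb)} ∧ ResCn F (d ∪ s) := by
  induction h with
  | base hc =>
    rcases mem_restrict.1 hc with ⟨c, hcF, hx, rfl⟩
    by_cases hxc : (x, !bb) ∈ c
    · refine ⟨{(x, !bb)}, Finset.Subset.refl _, ?_⟩
      have : c.erase (x, !bb) ∪ {(x, !bb)} = c := by
        ext l
        by_cases he : l = (x, !bb) <;> simp [he, hxc]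
      rw [this]; exact ResCn.base hcF
    · refine ⟨∅, Finset.empty_subset _, ?_⟩
      rw [Finset.union_empty, Finset.erase_eq_of_notMem hxc]
      exact ResCn.base hcF
  | @step C D E hC hD hR ihC ihD =>
    rcases ihC with ⟨s₁, hs₁, hC'⟩
    rcases ihD with ⟨s₂, hs₂, hD'⟩
    obtain ⟨y, c₁, c₂, hy1, hy2, hnt1, hnt2, hntE, rfl, rfl, rfl⟩ := hR
    have hxC : x ∉ varsC (insert (y, true) c₁) :=
      fun hmem => x_not_varsFin_restrict (resCn_vars hC hmem)
    have hxD : x ∉ varsC (insert (y, false) c₂) :=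
      fun hmem => x_not_varsFin_restrict (resCn_vars hD hmem)
    have hyx : y ≠ x := by
      intro he
      exact hxC (mem_varsC.2 ⟨true, by rw [← he]; exact Finset.mem_insert_self _ _⟩)
    have hxE : x ∉ varsC (c₁ ∪ c₂) := by
      intro hmem
      rcases mem_varsC.1 hmem with ⟨b, hb⟩
      rcases Finset.mem_union.1 hb with h1 | h2
      · exact hxC (mem_varsC.2 ⟨b, Finset.mem_insert_of_mem h1⟩)
      · exact hxD (mem_varsC.2 ⟨b, Finset.mem_insert_of_mem h2⟩)
    refine ⟨s₁ ∪ s₂, Finset.union_subset hs₁ hs₂, ?_⟩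
    refine ResCn.step hC' hD' ⟨y, c₁ ∪ s₁, c₂ ∪ s₂, ?_, ?_, ?_, ?_, ?_, ?_, ?_, ?_⟩
    · intro hmem
      rcases Finset.mem_union.1 hmem with h1 | h1
      · exact hy1 h1
      · exact hyx (congrArg Prod.fst (Finset.mem_singleton.1 (hs₁ h1)))
    · intro hmem
      rcases Finset.mem_union.1 hmem with h1 | h1
      · exact hy2 h1
      · exact hyx (congrArg Prod.fst (Finset.mem_singleton.1 (hs₂ h1)))
    · rw [← Finset.insert_union]
      exact nonTauto_union_sub hnt1 hxC hs₁
    · rw [← Finset.insert_union]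
      exact nonTauto_union_sub hnt2 hxD hs₂
    · have : c₁ ∪ s₁ ∪ (c₂ ∪ s₂) = (c₁ ∪ c₂) ∪ (s₁ ∪ s₂) := by
        ext l; simp only [Finset.mem_union]; tauto
      rw [this]
      exact nonTauto_union_sub hntE hxE (Finset.union_subset hs₁ hs₂)
    · rw [Finset.insert_union]
    · rw [Finset.insert_union]
    · ext l; simp only [Finset.mem_union]; tauto

theorem subsumption {b : Clause} (hb : NonTauto b) :
    ∀ (n : ℕ) (F : Finset Clause), (varsFin F \ varsC b).card = n →
      IsCNF F → entailsC (↑F) b → ∃ d, ResCn F d ∧ d ⊆ b := by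
  intro n
  induction n using Nat.strong_induction_on with
  | _ n ih =>
    intro F hn hF hent
    by_cases hx : ∃ x ∈ varsFin F, x ∉ varsC b
    · -- inductive case: restrict on x with both values
      obtain ⟨x, hxF, hxb⟩ := hx
      have key : ∀ bb : Bool, ∃ d, ResCn F d ∧ (d ⊆ b ∨ d ⊆ insert (x, !bb) b ∧ (x, !bb) ∈ d) := by
        intro bb
        have hmeas : (varsFin (restrict x bb F) \ varsC b).card < n := by
          rw [← hn]
          apply Finset.card_lt_card
          constructor
          · intro m hm
            rcases Finset.mem_sdiff.1 hm with ⟨h1, h2⟩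
            exact Finset.mem_sdiff.2 ⟨varsFin_restrict h1, h2⟩
          · intro hsub
            have := hsub (Finset.mem_sdiff.2 ⟨hxF, hxb⟩)
            exact x_not_varsFin_restrict (Finset.mem_sdiff.1 this).1
        obtain ⟨d, hd, hdb⟩ := ih _ hmeas (restrict x bb F) rfl (isCNF_restrict hF)
          (restrict_entails hxb hent)
        obtain ⟨s, hs, hds⟩ := lift_resCn hd
        rcases Finset.subset_singleton_iff.1 hs with rfl | rfl
        · exact ⟨d, by rwa [Finset.union_empty] at hds, Or.inl hdb⟩
        · refine ⟨d ∪ {(x, !bb)}, hds, Or.inr ⟨?_, Finset.mem_union_right _ (Finset.mem_singleton_self _)⟩⟩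
          intro l hl
          rcases Finset.mem_union.1 hl with h1 | h1
          · exact Finset.mem_insert_of_mem (hdb h1)
          · exact Finset.mem_insert.2 (Or.inl (Finset.mem_singleton.1 h1))
      obtain ⟨dp, hdp, hdpb⟩ := key true   -- may contain (x, false)
      obtain ⟨dn, hdn, hdnb⟩ := key false  -- may contain (x, true)
      rcases hdpb with h | ⟨hdpb, hdpx⟩
      · exact ⟨dp, hdp, h⟩
      rcases hdnb with h | ⟨hdnb, hdnx⟩
      · exact ⟨dn, hdn, h⟩
      -- resolve dn (contains (x,true)) with dp (contains (x,false))
      have hxb' : ∀ s : Bool, (x, s) ∉ b := fun s hs => hxb (mem_varsC.2 ⟨s, hs⟩)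
      set e₁ := dn.erase (x, true) with he₁
      set e₂ := dp.erase (x, false) with he₂
      have he₁b : e₁ ⊆ b := by
        intro l hl
        rcases Finset.mem_erase.1 hl with ⟨hne, hld⟩
        rcases Finset.mem_insert.1 (hdnb hld) with rfl | h
        · exact absurd rfl hne
        · exact h
      have he₂b : e₂ ⊆ b := by
        intro l hl
        rcases Finset.mem_erase.1 hl with ⟨hne, hld⟩
        rcases Finset.mem_insert.1 (hdpb hld) with rfl | h
        · exact absurd rfl hne
        · exact h
      have hdn' : dn = insert (x, true) e₁ := (Finset.insert_erase hdnx).symm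
      have hdp' : dp = insert (x, false) e₂ := (Finset.insert_erase hdpx).symm
      have hnt1 : NonTauto (insert (x, true) e₁) := by
        have : insert (x, true) e₁ = e₁ ∪ {(x, true)} := by
          ext l; by_cases he : l = (x, true) <;> simp [he, or_comm]
        rw [this]
        exact nonTauto_union_sub (nonTauto_mono he₁b hb)
          (fun hm => hxb' _ (he₁b ((mem_varsC.1 hm).choose_spec))) (Finset.Subset.refl _)
      have hnt2 : NonTauto (insert (x, false) e₂) := by
        have : insert (x, false) e₂ = e₂ ∪ {(x, false)} := by
          ext l; by_cases he : l = (x, false) <;> simp [he, or_comm]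
        rw [this]
        exact nonTauto_union_sub (nonTauto_mono he₂b hb)
          (fun hm => hxb' _ (he₂b ((mem_varsC.1 hm).choose_spec))) (Finset.Subset.refl _)
      have hsubE : e₁ ∪ e₂ ⊆ b := Finset.union_subset he₁b he₂b
      refine ⟨e₁ ∪ e₂, ResCn.step hdn hdp ⟨x, e₁, e₂, ?_, ?_, hnt1, hnt2,
        nonTauto_mono hsubE hb, hdn', hdp', rfl⟩, hsubE⟩
      · exact Finset.notMem_erase _ _
      · exact Finset.notMem_erase _ _
    · -- base case: all variables of F occur in b
      push_neg at hx
      set v : ℕ → Bool := fun n => decide ((n, false) ∈ b) with hv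
      have hvb : ¬ satClause v b := by
        rintro ⟨l, hl, hvl⟩
        rcases l with ⟨m, b'⟩
        cases b'
        · simp only [hv, decide_eq_false_iff_not] at hvl
          exact hvl hl
        · simp only [hv, decide_eq_true_eq] at hvl
          exact hb _ hvl hl
      have : ¬ satSet v (↑F) := fun hs => hvb (hent v hs)
      simp only [satSet, not_forall] at this
      obtain ⟨c, hcF, hcv⟩ := this
      have hcF' : c ∈ F := Finset.mem_coe.1 hcF
      refine ⟨c, ResCn.base hcF', ?_⟩
      intro l hl
      rcases l with ⟨m, b'⟩
      have hmb : m ∈ varsC b := hx m (Finset.mem_biUnion.2 ⟨c, hcF', mem_varsC.2 ⟨b', hl⟩⟩)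
      rcases mem_varsC.1 hmb with ⟨b0, hb0⟩
      have hne : v m ≠ b' := fun he => hcv ⟨(m, b'), hl, he⟩
      cases b0
      · have hvm : v m = true := by simp [hv, hb0]
        cases b'
        · exact hb0
        · exact absurd hvm hne
      · have hnf : (m, false) ∉ b := fun hf => hb _ hf (by simpa [negLit] using hb0)
        have hvm : v m = false := by simp [hv, hnf]
        cases b'
        · exact absurd hvm hne
        · exact hb0

/-- a CNF formula all of whose clauses are superirredundant is minimal. -/
theorem all_superirredundant_minimal
    (F : Finset Clause) (hF : IsCNF F)
    (hirr : ∀ c ∈ F, ¬ SuperRedundant F c) :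
    ∀ B : Finset Clause, IsCNF B → equivF F B → size F ≤ size B := by
  intro B hB heq
  -- every clause of B is subsumed by a resolution consequence of F
  have hsub : ∀ b ∈ B, ∃ d, ResCn F d ∧ d ⊆ b := by
    intro b hbB
    refine subsumption (hB b hbB) ((varsFin F \ varsC b).card) F rfl hF ?_
    intro v hv
    exact ((heq v).1 hv) b (Finset.mem_coe.2 hbB)
  -- for each superirredundant clause c, some b ∈ B has c as its unique subsumer
  have huniq : ∀ c ∈ F, ∃ b, b ∈ B ∧ ∀ d, ResCn F d → d ⊆ b → d = c := by
    intro c hcF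
    by_contra hcon
    push_neg at hcon
    apply hirr c hcF
    intro v hv
    have hvB : satSet v (↑B) := by
      intro b hbB'
      have hbB : b ∈ B := Finset.mem_coe.1 hbB'
      obtain ⟨d0, hd0, hd0b⟩ := hsub b hbB
      -- get a subsumer distinct from c
      obtain ⟨d, hd, hdb, hdc⟩ : ∃ d, ResCn F d ∧ d ⊆ b ∧ d ≠ c := by
        obtain ⟨d, hd, hdb, hdc⟩ := hcon b hbB
        exact ⟨d, hd, hdb, hdc⟩
      have : satClause v d := hv d ⟨hd, hdc⟩
      obtain ⟨l, hl, hvl⟩ := this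
      exact ⟨l, hdb hl, hvl⟩
    have hvF : satSet v (↑F) := (heq v).2 hvB
    exact hvF c (Finset.mem_coe.2 hcF)
  -- choose the witnessing clause
  have hchoice : ∀ c : Clause, ∃ b, c ∈ F → (b ∈ B ∧ ∀ d, ResCn F d → d ⊆ b → d = c) := by
    intro c
    by_cases hcF : c ∈ F
    · obtain ⟨b, hb⟩ := huniq c hcF
      exact ⟨b, fun _ => hb⟩
    · exact ⟨∅, fun h => absurd h hcF⟩
  choose g hg using hchoice
  have hgB : ∀ c ∈ F, g c ∈ B := fun c hc => (hg c hc).1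
  have hcg : ∀ c ∈ F, c ⊆ g c := by
    intro c hc
    obtain ⟨d, hd, hdb⟩ := hsub (g c) (hgB c hc)
    have heq' := (hg c hc).2 d hd hdb
    rwa [heq'] at hdb
  have hinj : ∀ c₁ ∈ F, ∀ c₂ ∈ F, g c₁ = g c₂ → c₁ = c₂ := by
    intro c₁ h1 c₂ h2 hgeq
    have := (hg c₁ h1).2 c₂ (ResCn.base h2) (hgeq ▸ hcg c₂ h2)
    exact this.symm
  calc size F = ∑ c ∈ F, c.card := rfl
    _ ≤ ∑ c ∈ F, (g c).card :=
        Finset.sum_le_sum (fun c hc => Finset.card_le_card (hcg c hc))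
    _ = ∑ b ∈ F.image g, b.card := (Finset.sum_image hinj).symm
    _ ≤ ∑ b ∈ B, b.card := Finset.sum_le_sum_of_subset (by
        intro b hb
        rcases Finset.mem_image.1 hb with ⟨c, hc, rfl⟩
        exact hgB c hc)
    _ = size B := rfl
end

section
/- A clause c of a CNF formula F is superredundant in F if and only if either (i) some clause c₁ with c₁ ⊊ c belongs to ResCn(F), or (ii) there exist a variable a occurring neither positively nor negatively in c and clauses c₁, c₂ with c = c₁ ∪ c₂ such that both c₁ ∪ {a} and c₂ ∪ {¬a} belong to ResCn(F). -/
lemma bool_eq_not {a b : Bool} (h : a ≠ b) : a = !b := by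
  cases a <;> cases b <;> simp_all

lemma nonTauto_subset {c d : Clause} (h : d ⊆ c) (hc : NonTauto c) : NonTauto d :=
  fun l hl hnl => hc l (h hl) (h hnl)

lemma resCn_nonTauto {F : Finset Clause} (hF : IsCNF F) {d : Clause} (h : ResCn F d) :
    NonTauto d := by
  induction h with
  | base h => exact hF _ h
  | step _ _ hres _ _ =>
      obtain ⟨x, c₁, c₂, _, _, _, _, hnt, _, _, hE⟩ := hres
      exact hE ▸ hnt

open Classical in
noncomputable def forced (W : Set Clause) : ℕ → Bool :=
  WellFounded.fix Nat.lt_wfRel.wf (fun n ih =>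
    if ∃ d ∈ W, ((n, true) : Lit) ∈ d ∧ ∀ l ∈ d, l ≠ ((n, true) : Lit) →
        ∃ h : l.1 < n, ih l.1 h = !l.2 then true else false)

open Classical in
lemma forced_eq (W : Set Clause) (n : ℕ) :
    forced W n = if ∃ d ∈ W, ((n, true) : Lit) ∈ d ∧ ∀ l ∈ d, l ≠ ((n, true) : Lit) →
        ∃ _ : l.1 < n, forced W l.1 = !l.2 then true else false := by
  rw [forced, WellFounded.fix_eq]

lemma sat_of_closed (W : Set Clause) (hNT : ∀ d ∈ W, NonTauto d) (hne : (∅ : Clause) ∉ W)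
    (hclosed : ∀ C D E : Clause, C ∈ W → D ∈ W → Resolvent C D E → E ∈ W) :
    satSet (forced W) W := by
  classical
  set v := forced W with hvdef
  by_contra hcon
  simp only [satSet, not_forall] at hcon
  obtain ⟨d0, hd0W, hd0⟩ := hcon
  have hfals : ∀ d : Clause, ¬ satClause v d → ∀ l ∈ d, v l.1 = !l.2 := by
    intro d hd l hl
    by_contra h
    exact hd ⟨l, hl, by cases h2 : l.2 <;> cases hv : v l.1 <;> simp_all⟩
  have hP : ∃ n : ℕ, ∃ d ∈ W, (∀ l ∈ d, v l.1 = !l.2) ∧ ∀ l ∈ d, l.1 ≤ n :=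
    ⟨d0.sup Prod.fst, d0, hd0W, hfals d0 hd0, fun l hl => Finset.le_sup hl⟩
  obtain ⟨n₀, ⟨d, hdW, hdf, hdb⟩, hmin⟩ :
      ∃ n, (∃ d ∈ W, (∀ l ∈ d, v l.1 = !l.2) ∧ ∀ l ∈ d, l.1 ≤ n) ∧
        ∀ m, m < n → ¬ ∃ d ∈ W, (∀ l ∈ d, v l.1 = !l.2) ∧ ∀ l ∈ d, l.1 ≤ m :=
    ⟨Nat.find hP, Nat.find_spec hP, fun m hm => Nat.find_min hP hm⟩
  have hdne : d ≠ ∅ := fun h => hne (h ▸ hdW)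
  have hvar : ∃ b : Bool, ((n₀, b) : Lit) ∈ d := by
    by_contra hno
    push_neg at hno
    have hlt : ∀ l ∈ d, l.1 < n₀ := by
      intro l hl
      rcases lt_or_eq_of_le (hdb l hl) with h | h
      · exact h
      · exact absurd (show ((n₀, l.2) : Lit) ∈ d from by
          have : l = ((n₀, l.2) : Lit) := Prod.ext h rfl
          exact this ▸ hl) (hno l.2)
    obtain ⟨l, hl⟩ := Finset.nonempty_iff_ne_empty.mpr hdne
    have h1 : 1 ≤ n₀ := by have := hlt l hl; omega
    exact hmin (n₀ - 1) (by omega) ⟨d, hdW, hdf, fun l hl => by have := hlt l hl; omega⟩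
  by_cases htr : ((n₀, true) : Lit) ∈ d
  · -- the forced condition holds at n₀, so v n₀ = true, contradicting falsification
    have hcond : ∃ d' ∈ W, ((n₀, true) : Lit) ∈ d' ∧ ∀ l ∈ d', l ≠ ((n₀, true) : Lit) →
        ∃ _ : l.1 < n₀, v l.1 = !l.2 := by
      refine ⟨d, hdW, htr, fun l hl hne' => ?_⟩
      have hle := hdb l hl
      have hlt : l.1 < n₀ := by
        rcases lt_or_eq_of_le hle with h | h
        · exact h
        · exfalso
          have hl2 : l.2 = false := by
            cases h2 : l.2
            · rfl
            · exact absurd (Prod.ext h h2) hne'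
          have hlf : l = ((n₀, false) : Lit) := Prod.ext h hl2
          exact hNT d hdW (n₀, true) htr (by simpa [negLit] using hlf ▸ hl)
      exact ⟨hlt, hdf l hl⟩
    have hvt : v n₀ = true := by rw [hvdef, forced_eq, if_pos hcond]
    have h2 : v n₀ = false := by simpa using hdf _ htr
    simp [hvt] at h2
  · obtain ⟨b, hb⟩ := hvar
    have hbf : ((n₀, false) : Lit) ∈ d := by
      cases b
      · exact hb
      · exact absurd hb htr
    have hvt : v n₀ = true := by simpa using hdf _ hbf
    -- so the forced condition must hold at n₀
    have hcond : ∃ d' ∈ W, ((n₀, true) : Lit) ∈ d' ∧ ∀ l ∈ d', l ≠ ((n₀, true) : Lit) →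
        ∃ _ : l.1 < n₀, v l.1 = !l.2 := by
      by_contra hno
      rw [hvdef, forced_eq, if_neg hno] at hvt
      exact Bool.noConfusion hvt
    obtain ⟨d', hd'W, hd't, hd'c⟩ := hcond
    -- resolve d' and d on n₀
    set c₁ := d'.erase ((n₀, true) : Lit) with hc₁
    set c₂ := d.erase ((n₀, false) : Lit) with hc₂
    have hE1 : d' = insert ((n₀, true) : Lit) c₁ := (Finset.insert_erase hd't).symm
    have hE2 : d = insert ((n₀, false) : Lit) c₂ := (Finset.insert_erase hbf).symm
    have hc₁f : ∀ l ∈ c₁, l.1 < n₀ ∧ v l.1 = !l.2 := by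
      intro l hl
      obtain ⟨hlt, hf⟩ := hd'c l (Finset.mem_of_mem_erase hl) (Finset.ne_of_mem_erase hl)
      exact ⟨hlt, hf⟩
    have hc₂f : ∀ l ∈ c₂, l.1 < n₀ ∧ v l.1 = !l.2 := by
      intro l hl
      have hld := Finset.mem_of_mem_erase hl
      refine ⟨?_, hdf l hld⟩
      rcases lt_or_eq_of_le (hdb l hld) with h | h
      · exact h
      · exfalso
        cases h2 : l.2
        · exact Finset.ne_of_mem_erase hl (Prod.ext h h2)
        · exact htr ((Prod.ext h h2 : l = ((n₀, true) : Lit)) ▸ hld)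
    have hEf : ∀ l ∈ c₁ ∪ c₂, l.1 < n₀ ∧ v l.1 = !l.2 := by
      intro l hl
      rcases Finset.mem_union.mp hl with h | h
      · exact hc₁f l h
      · exact hc₂f l h
    have hntE : NonTauto (c₁ ∪ c₂) := by
      intro l hl hnl
      have h1 := (hEf l hl).2
      have h2 := (hEf _ hnl).2
      simp only [negLit] at h2
      rw [h1] at h2
      cases l.2 <;> simp at h2
    have hres : Resolvent d' d (c₁ ∪ c₂) :=
      ⟨n₀, c₁, c₂, Finset.notMem_erase _ _, Finset.notMem_erase _ _,
        hE1 ▸ hNT d' hd'W, hE2 ▸ hNT d hdW, hntE, hE1, hE2, rfl⟩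
    have hEW : c₁ ∪ c₂ ∈ W := hclosed d' d _ hd'W hdW hres
    have hEne : c₁ ∪ c₂ ≠ ∅ := fun h => hne (h ▸ hEW)
    obtain ⟨l, hl⟩ := Finset.nonempty_iff_ne_empty.mpr hEne
    have h1 : 1 ≤ n₀ := by have := (hEf l hl).1; omega
    exact hmin (n₀ - 1) (by omega)
      ⟨c₁ ∪ c₂, hEW, fun l hl => (hEf l hl).2, fun l hl => by have := (hEf l hl).1; omega⟩

/-- a clause `c` of `F` is superredundant iff either a strict subclause of
`c` is in `ResCn(F)`, or `c = c₁ ∪ c₂` and both `c₁ ∪ {a}` and `c₂ ∪ {¬a}` are in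
`ResCn(F)` for some variable `a` not occurring in `c`. -/
theorem superredundant_iff_last_step
    (F : Finset Clause) (hF : IsCNF F) (c : Clause) (hc : c ∈ F) :
    SuperRedundant F c ↔
      ((∃ c₁ : Clause, c₁ ⊂ c ∧ ResCn F c₁) ∨
       (∃ (a : ℕ) (c₁ c₂ : Clause),
         (a, true) ∉ c ∧ (a, false) ∉ c ∧ c = c₁ ∪ c₂ ∧
         ResCn F (insert (a, true) c₁) ∧ ResCn F (insert (a, false) c₂))) := by
  classical
  have hcNT : NonTauto c := hF c hc
  constructor
  · intro hsr
    by_contra hcon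
    rw [not_or] at hcon
    obtain ⟨h1, h2⟩ := hcon
    -- the set of "outside parts" of clauses of ResCn F that agree with c on c's variables
    set W : Set Clause := {e | e ≠ ∅ ∧ (∀ l ∈ e, ∀ b : Bool, ((l.1, b) : Lit) ∉ c) ∧
      ∃ s : Clause, s ⊆ c ∧ ResCn F (e ∪ s)} with hWdef
    have hWNT : ∀ d ∈ W, NonTauto d := by
      rintro d ⟨-, -, s, -, hR⟩
      exact nonTauto_subset Finset.subset_union_left (resCn_nonTauto hF hR)
    have hWne : (∅ : Clause) ∉ W := fun h => h.1 rfl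
    have hclosed : ∀ C D E : Clause, C ∈ W → D ∈ W → Resolvent C D E → E ∈ W := by
      rintro C D E hC hD ⟨x, c₁, c₂, hx1, hx2, hntC, hntD, hntE, hCeq, hDeq, hEeq⟩
      subst hCeq; subst hDeq; subst hEeq
      obtain ⟨-, hvC, s₁, hs₁, hR₁⟩ := hC
      obtain ⟨-, hvD, s₂, hs₂, hR₂⟩ := hD
      have hxnc : ∀ b : Bool, ((x, b) : Lit) ∉ c :=
        hvC (x, true) (Finset.mem_insert_self _ _)
      have hvc₁ : ∀ l ∈ c₁, ∀ b : Bool, ((l.1, b) : Lit) ∉ c :=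
        fun l hl => hvC l (Finset.mem_insert_of_mem hl)
      have hvc₂ : ∀ l ∈ c₂, ∀ b : Bool, ((l.1, b) : Lit) ∉ c :=
        fun l hl => hvD l (Finset.mem_insert_of_mem hl)
      rw [Finset.insert_union] at hR₁ hR₂
      have hxs₁ : ((x, true) : Lit) ∉ c₁ ∪ s₁ := by
        simp only [Finset.mem_union, not_or]
        exact ⟨hx1, fun h => hxnc true (hs₁ h)⟩
      have hxs₂ : ((x, false) : Lit) ∉ c₂ ∪ s₂ := by
        simp only [Finset.mem_union, not_or]
        exact ⟨hx2, fun h => hxnc false (hs₂ h)⟩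
      have hntBig : NonTauto ((c₁ ∪ s₁) ∪ (c₂ ∪ s₂)) := by
        intro l hl hnl
        have hmem : ∀ m : Lit, m ∈ (c₁ ∪ s₁) ∪ (c₂ ∪ s₂) → m ∈ c₁ ∪ c₂ ∨ m ∈ c := by
          intro m hm
          simp only [Finset.mem_union] at hm ⊢
          rcases hm with (h | h) | (h | h)
          · exact Or.inl (Or.inl h)
          · exact Or.inr (hs₁ h)
          · exact Or.inl (Or.inr h)
          · exact Or.inr (hs₂ h)
        have hvE : ∀ m : Lit, m ∈ c₁ ∪ c₂ → ∀ b : Bool, ((m.1, b) : Lit) ∉ c := by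
          intro m hm
          rcases Finset.mem_union.mp hm with h | h
          · exact hvc₁ m h
          · exact hvc₂ m h
        rcases hmem l hl with hle | hlc
        · rcases hmem _ hnl with hne | hnc
          · exact hntE l hle hne
          · exact hvE l hle (!l.2) hnc
        · rcases hmem _ hnl with hne | hnc
          · have : ((l.1, !l.2) : Lit) ∈ c₁ ∪ c₂ := hne
            have := hvE _ this l.2
            simp only [Bool.not_not] at this
            exact this hlc
          · exact hcNT l hlc hnc
      by_cases hE0 : c₁ ∪ c₂ = (∅ : Clause)
      · exfalso
        obtain ⟨he1, he2⟩ := Finset.union_eq_empty.mp hE0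
        subst he1; subst he2
        simp only [Finset.empty_union] at hR₁ hR₂ hxs₁ hxs₂ hntBig
        have hress : Resolvent (insert (x, true) s₁) (insert (x, false) s₂) (s₁ ∪ s₂) :=
          ⟨x, s₁, s₂, hxs₁, hxs₂, resCn_nonTauto hF hR₁, resCn_nonTauto hF hR₂,
            nonTauto_subset (Finset.union_subset hs₁ hs₂) hcNT, rfl, rfl, rfl⟩
        have hRs : ResCn F (s₁ ∪ s₂) := ResCn.step hR₁ hR₂ hress
        by_cases heq : s₁ ∪ s₂ = c
        · exact h2 ⟨x, s₁, s₂, hxnc true, hxnc false, heq.symm, hR₁, hR₂⟩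
        · exact h1 ⟨s₁ ∪ s₂,
            lt_of_le_of_ne (Finset.union_subset hs₁ hs₂) heq, hRs⟩
      · refine ⟨hE0, fun l hl => ?_, s₁ ∪ s₂, Finset.union_subset hs₁ hs₂, ?_⟩
        · rcases Finset.mem_union.mp hl with h | h
          · exact hvc₁ l h
          · exact hvc₂ l h
        · have hres : Resolvent (insert (x, true) (c₁ ∪ s₁)) (insert (x, false) (c₂ ∪ s₂))
              ((c₁ ∪ s₁) ∪ (c₂ ∪ s₂)) :=
            ⟨x, c₁ ∪ s₁, c₂ ∪ s₂, hxs₁, hxs₂, resCn_nonTauto hF hR₁,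
              resCn_nonTauto hF hR₂, hntBig, rfl, rfl, rfl⟩
          have := ResCn.step hR₁ hR₂ hres
          have heq : (c₁ ∪ s₁) ∪ (c₂ ∪ s₂) = (c₁ ∪ c₂) ∪ (s₁ ∪ s₂) := by
            ext l; simp only [Finset.mem_union]; tauto
          rwa [heq] at this
    have hsat := sat_of_closed W hWNT hWne hclosed
    set w := forced W with hwdef
    set v : ℕ → Bool := fun n =>
      if h : ∃ b : Bool, ((n, b) : Lit) ∈ c then !h.choose else w n with hvdef
    have hv1 : ∀ (n : ℕ) (b : Bool), ((n, b) : Lit) ∈ c → v n = !b := by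
      intro n b hb
      have hex : ∃ b : Bool, ((n, b) : Lit) ∈ c := ⟨b, hb⟩
      have hbb : hex.choose = b := by
        by_contra hneq
        have hnb : hex.choose = !b := bool_eq_not hneq
        have := hex.choose_spec
        rw [hnb] at this
        exact hcNT (n, b) hb (by simpa [negLit] using this)
      rw [hvdef]
      simp only
      rw [dif_pos hex, hbb]
    have hv2 : ∀ n : ℕ, (∀ b : Bool, ((n, b) : Lit) ∉ c) → v n = w n := by
      intro n hn
      rw [hvdef]
      simp only
      rw [dif_neg (by push_neg; exact fun b => hn b)]
    have hnc : ¬ satClause v c := by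
      rintro ⟨l, hl, hvl⟩
      have := hv1 l.1 l.2 hl
      rw [hvl] at this
      exact absurd this (by cases l.2 <;> simp)
    have hsatset : satSet v ({d | ResCn F d} \ {c}) := by
      rintro d ⟨hdR, hdne⟩
      simp only [Set.mem_singleton_iff] at hdne
      by_cases hA : ∃ l ∈ d, l ∉ c ∧ ∃ b : Bool, ((l.1, b) : Lit) ∈ c
      · obtain ⟨l, hld, hlnc, b, hb⟩ := hA
        have hbne : b ≠ l.2 := fun h => hlnc (by
          have : ((l.1, l.2) : Lit) = l := rfl
          rw [h] at hb; rw [← this]; exact hb)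
        have hbb : b = !l.2 := bool_eq_not hbne
        have hmem : ((l.1, !l.2) : Lit) ∈ c := hbb ▸ hb
        refine ⟨l, hld, ?_⟩
        rw [hv1 _ _ hmem]
        simp
      · push_neg at hA
        by_cases he : d \ c = (∅ : Clause)
        · exact absurd ⟨d, lt_of_le_of_ne (Finset.sdiff_eq_empty_iff_subset.mp he) hdne, hdR⟩ h1
        · have heW : d \ c ∈ W := by
            refine ⟨he, fun l hl b => ?_, d ∩ c, Finset.inter_subset_right, ?_⟩
            · obtain ⟨hld, hlnc⟩ := Finset.mem_sdiff.mp hl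
              exact hA l hld hlnc b
            · rw [Finset.sdiff_union_inter]; exact hdR
          obtain ⟨l, hle, hwl⟩ := hsat _ heW
          obtain ⟨hld, hlnc⟩ := Finset.mem_sdiff.mp hle
          refine ⟨l, hld, ?_⟩
          rw [hv2 l.1 (hA l hld hlnc)]
          exact hwl
    exact hnc (hsr v hsatset)
  · rintro (⟨c₁, hss, hR⟩ | ⟨a, c₁, c₂, hat, haf, hceq, hR1, hR2⟩)
    · intro v hv
      obtain ⟨l, hl, hvl⟩ := hv c₁ ⟨hR, by
        simp only [Set.mem_singleton_iff]
        exact hss.ne⟩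
      exact ⟨l, hss.subset hl, hvl⟩
    · intro v hv
      have hd1 : satClause v (insert (a, true) c₁) := hv _ ⟨hR1, by
        simp only [Set.mem_singleton_iff]
        intro h
        exact hat (h ▸ Finset.mem_insert_self _ _)⟩
      have hd2 : satClause v (insert (a, false) c₂) := hv _ ⟨hR2, by
        simp only [Set.mem_singleton_iff]
        intro h
        exact haf (h ▸ Finset.mem_insert_self _ _)⟩
      obtain ⟨l, hl, hvl⟩ := hd1
      rcases Finset.mem_insert.mp hl with h | h
      · obtain ⟨l', hl', hvl'⟩ := hd2
        rcases Finset.mem_insert.mp hl' with h' | h'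
        · exfalso
          subst h; subst h'
          simp only at hvl hvl'
          rw [hvl] at hvl'
          exact Bool.noConfusion hvl'
        · exact ⟨l', by rw [hceq]; exact Finset.mem_union_right _ h', hvl'⟩
      · exact ⟨l, by rw [hceq]; exact Finset.mem_union_left _ h, hvl⟩
end

section
/- A clause c of a CNF formula F is superredundant in F if and only if (F \ {c}) ∪ resolve(c, F) ⊨ c. -/
/-- The set of clauses obtained by one resolution step between a clause of `A` and a
clause of `B`. -/
def resolveSets (A B : Set Clause) : Set Clause :=
  {E | ∃ C ∈ A, ∃ D ∈ B, Resolvent C D E ∨ Resolvent D C E}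

/-- Symmetric form of a resolution step: `C` contains `(y, b)`, `D` contains `(y, !b)`,
and the resolvent is the union of the two clauses minus the clashing literals. -/
def Res (b : Bool) (C D E : Clause) : Prop :=
  ∃ y : ℕ, (y, b) ∈ C ∧ (y, !b) ∈ D ∧ NonTauto C ∧ NonTauto D ∧ NonTauto E ∧
    E = C.erase (y, b) ∪ D.erase (y, !b)

lemma bool_of_ne_not {a b : Bool} (h : a ≠ !b) : a = b := by
  cases a <;> cases b <;> simp_all

lemma bool_ne_not_self (b : Bool) : b ≠ !b := by cases b <;> simp

lemma negLit_negLit (l : Lit) : negLit (negLit l) = l := by simp [negLit]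

lemma res_true_iff {C D E : Clause} : Res true C D E ↔ Resolvent C D E := by
  constructor
  · rintro ⟨y, hyC, hyD, ntC, ntD, ntE, rfl⟩
    simp only [Bool.not_true] at hyD
    refine ⟨y, C.erase (y, true), D.erase (y, false), Finset.notMem_erase _ _,
      Finset.notMem_erase _ _, ?_, ?_, ntE, ?_, ?_, by simp⟩
    · rwa [Finset.insert_erase hyC]
    · rwa [Finset.insert_erase hyD]
    · rw [Finset.insert_erase hyC]
    · rw [Finset.insert_erase hyD]
  · rintro ⟨x, c₁, c₂, hx1, hx2, nt1, nt2, ntE, rfl, rfl, rfl⟩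
    refine ⟨x, Finset.mem_insert_self _ _, by simp, nt1, nt2, ntE, ?_⟩
    simp [Finset.erase_insert hx1, Finset.erase_insert hx2]

lemma res_false_iff {C D E : Clause} : Res false C D E ↔ Resolvent D C E := by
  constructor
  · rintro ⟨y, hyC, hyD, ntC, ntD, ntE, rfl⟩
    simp only [Bool.not_false] at hyD ntE
    refine ⟨y, D.erase (y, true), C.erase (y, false), Finset.notMem_erase _ _,
      Finset.notMem_erase _ _, ?_, ?_, ?_, ?_, ?_, ?_⟩
    · rwa [Finset.insert_erase hyD]
    · rwa [Finset.insert_erase hyC]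
    · rwa [Finset.union_comm]
    · rw [Finset.insert_erase hyD]
    · rw [Finset.insert_erase hyC]
    · simp [Finset.union_comm]
  · rintro ⟨x, c₁, c₂, hx1, hx2, nt1, nt2, ntE, rfl, rfl, rfl⟩
    refine ⟨x, Finset.mem_insert_self _ _, by simp, nt2, nt1, ntE, ?_⟩
    simp [Finset.erase_insert hx1, Finset.erase_insert hx2, Finset.union_comm]

/-- One resolution step is sound for a fixed valuation. -/
lemma res_sound {v : ℕ → Bool} {b : Bool} {C D E : Clause}
    (h : Res b C D E) (hC : satClause v C) (hD : satClause v D) : satClause v E := by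
  obtain ⟨y, hyC, hyD, _, _, _, rfl⟩ := h
  obtain ⟨l, hl, hvl⟩ := hC
  by_cases hly : l = (y, b)
  · obtain ⟨m, hm, hvm⟩ := hD
    by_cases hmy : m = (y, !b)
    · subst hly hmy
      have hvl' : v y = b := hvl
      have hvm' : v y = !b := hvm
      rw [hvl'] at hvm'
      exact absurd hvm' (bool_ne_not_self b)
    · exact ⟨m, Finset.mem_union_right _ (Finset.mem_erase.2 ⟨hmy, hm⟩), hvm⟩
  · exact ⟨l, Finset.mem_union_left _ (Finset.mem_erase.2 ⟨hly, hl⟩), hvl⟩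

/-- A resolvent with `c` as one of the parents is distinct from `c`. -/
lemma res_ne {b : Bool} {c D E : Clause} (h : Res b c D E) : E ≠ c := by
  obtain ⟨y, hyc, hyD, ntc, ntD, ntE, rfl⟩ := h
  intro hEc
  have h1 : (y, b) ∉ D := by simpa [negLit] using ntD _ hyD
  have h2 : (y, b) ∉ c.erase (y, b) ∪ D.erase (y, !b) := by
    simp [Finset.mem_union, Finset.mem_erase, h1]
  rw [hEc] at h2
  exact h2 hyc


/-- Key lemma: if `v` satisfies `(F \\ {c}) ∪ resolve(c, F)`, then `v` satisfies every
clause of the resolution closure of `F` other than `c`, and moreover every resolvent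
of `c` with a clause of the closure. -/
lemma key_lemma (F : Finset Clause) (c : Clause) (v : ℕ → Bool)
    (hv : satSet v (((↑F : Set Clause) \ {c}) ∪ resolveSets {c} (↑F : Set Clause)))
    {d : Clause} (hd : ResCn F d) :
    (d ≠ c → satClause v d) ∧ (∀ E (b : Bool), Res b c d E → satClause v E) := by
  induction hd with
  | @base d hdF =>
    constructor
    · intro hne
      exact hv d (Or.inl ⟨hdF, hne⟩)
    · intro E b h
      refine hv E (Or.inr ⟨c, rfl, d, hdF, ?_⟩)
      cases b
      · exact Or.inr (res_false_iff.1 h)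
      · exact Or.inl (res_true_iff.1 h)
  | @step C D d hC hD hR ihC ihD =>
    obtain ⟨x, hxC, hxD, ntC, ntD, ntd, hdeq⟩ := res_true_iff.2 hR
    simp only [Bool.not_true] at hxD hdeq
    have h1 : d ≠ c → satClause v d := by
      intro _
      by_cases hCc : C = c
      · exact ihD.2 d true (by rw [← hCc]; exact res_true_iff.2 hR)
      · by_cases hDc : D = c
        · exact ihC.2 d false (res_false_iff.2 (by rw [← hDc]; exact hR))
        · exact res_sound (res_true_iff.2 hR) (ihC.1 hCc) (ihD.1 hDc)
    refine ⟨h1, ?_⟩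
    rintro E b ⟨y, hyc, hyd, ntc, -, ntE, hEeq⟩
    by_contra hnE
    have hfalse : ∀ l ∈ E, v l.1 ≠ l.2 := fun l hl h => hnE ⟨l, hl, h⟩
    have hxfC : (x, false) ∉ C := by simpa [negLit] using ntC _ hxC
    have hxtD : (x, true) ∉ D := by simpa [negLit] using ntD _ hxD
    have hxtd : (x, true) ∉ d := by
      simp [hdeq, Finset.mem_union, Finset.mem_erase, hxtD]
    have hxfd : (x, false) ∉ d := by
      simp [hdeq, Finset.mem_union, Finset.mem_erase, hxfC]
    have hyx : y ≠ x := by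
      rintro rfl
      cases b
      · exact hxtd (by simpa using hyd)
      · exact hxfd (by simpa using hyd)
    have hybd : (y, b) ∉ d := by simpa [negLit] using ntd _ hyd
    have hdnec : d ≠ c := fun h => hybd (by rw [h]; exact hyc)
    have hdfalse : ∀ l ∈ d, l ≠ (y, !b) → v l.1 ≠ l.2 := by
      intro l hl hne
      apply hfalse
      rw [hEeq]
      exact Finset.mem_union_right _ (Finset.mem_erase.2 ⟨hne, hl⟩)
    have hcfalse0 : ∀ l ∈ c, l ≠ (y, b) → v l.1 ≠ l.2 := by
      intro l hl hne
      apply hfalse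
      rw [hEeq]
      exact Finset.mem_union_left _ (Finset.mem_erase.2 ⟨hne, hl⟩)
    have hvy : v y = !b := by
      obtain ⟨l, hl, hvl⟩ := h1 hdnec
      by_cases hly : l = (y, !b)
      · subst hly; exact hvl
      · exact absurd hvl (hdfalse l hl hly)
    have hcfalse : ∀ l ∈ c, v l.1 ≠ l.2 := by
      intro l hl
      by_cases hly : l = (y, b)
      · subst hly
        show v y ≠ b
        rw [hvy]
        exact fun h => bool_ne_not_self b h.symm
      · exact hcfalse0 l hl hly
    have hcore : ∀ (X : Clause) (s : Bool), (x, s) ∈ X → NonTauto X →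
        (∀ E' (b' : Bool), Res b' c X E' → satClause v E') →
        (∀ l, l ∈ X → l ≠ (x, s) → l ∈ d) →
        (y, !b) ∈ X → v x = s := by
      intro X s hxX ntX ihX hXd hyX
      by_cases hnt : NonTauto (c.erase (y, b) ∪ X.erase (y, !b))
      · obtain ⟨l, hl, hvl⟩ := ihX _ b ⟨y, hyc, hyX, ntc, ntX, hnt, rfl⟩
        rcases Finset.mem_union.1 hl with hl' | hl'
        · exact absurd hvl (hcfalse l (Finset.mem_of_mem_erase hl'))
        · obtain ⟨hlny, hlX⟩ := Finset.mem_erase.1 hl'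
          by_cases hlx : l = (x, s)
          · subst hlx; exact hvl
          · exact absurd hvl (hdfalse l (hXd l hlX hlx) hlny)
      · rw [NonTauto] at hnt
        push_neg at hnt
        obtain ⟨l, hl, hnl⟩ := hnt
        have main : ∀ m, m ∈ c.erase (y, b) → negLit m ∈ X.erase (y, !b) → v x = s := by
          intro m hm hnm
          obtain ⟨hmny, hmc⟩ := Finset.mem_erase.1 hm
          obtain ⟨hnmny, hnmX⟩ := Finset.mem_erase.1 hnm
          by_cases hmx : negLit m = (x, s)
          · have hmeq : m = (x, !s) := by
              rw [← negLit_negLit m, hmx]; simp [negLit]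
            have hne := hcfalse m hmc
            rw [hmeq] at hne
            exact bool_of_ne_not hne
          · have hnd : negLit m ∈ d := hXd _ hnmX hmx
            have hf1 := hdfalse _ hnd hnmny
            have hf2 := hcfalse m hmc
            exact absurd (bool_of_ne_not hf1) hf2
        rcases Finset.mem_union.1 hl with h1' | h1' <;>
          rcases Finset.mem_union.1 hnl with h2' | h2'
        · exact absurd (Finset.mem_of_mem_erase h2')
            (ntc l (Finset.mem_of_mem_erase h1'))
        · exact main l h1' h2'
        · exact main (negLit l) h2' (by rw [negLit_negLit]; exact h1')
        · exact absurd (Finset.mem_of_mem_erase h2')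
            (ntX l (Finset.mem_of_mem_erase h1'))
    have hCd : ∀ l, l ∈ C → l ≠ (x, true) → l ∈ d := by
      intro l hl hne
      rw [hdeq]
      exact Finset.mem_union_left _ (Finset.mem_erase.2 ⟨hne, hl⟩)
    have hDd : ∀ l, l ∈ D → l ≠ (x, false) → l ∈ d := by
      intro l hl hne
      rw [hdeq]
      exact Finset.mem_union_right _ (Finset.mem_erase.2 ⟨hne, hl⟩)
    have hA : (y, !b) ∈ C → v x = true := fun h => hcore C true hxC ntC ihC.2 hCd h
    have hB : (y, !b) ∈ D → v x = false := fun h => hcore D false hxD ntD ihD.2 hDd h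
    have hyd' : (y, !b) ∈ C.erase (x, true) ∪ D.erase (x, false) := by rwa [hdeq] at hyd
    have hyxp : ∀ s : Bool, (y, b) ≠ (x, s) := by
      intro s h
      exact hyx (congrArg Prod.fst h)
    rcases Finset.mem_union.1 hyd' with hyC | hyD
    · have hvx : v x = true := hA (Finset.mem_of_mem_erase hyC)
      have hDc : D ≠ c := by
        intro h
        exact hybd (hDd (y, b) (by rw [h]; exact hyc) (hyxp false))
      obtain ⟨l, hl, hvl⟩ := ihD.1 hDc
      by_cases hl1 : l = (x, false)
      · subst hl1
        simp only at hvl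
        rw [hvx] at hvl
        exact Bool.noConfusion hvl
      · by_cases hl2 : l = (y, !b)
        · have := hB (by rw [← hl2]; exact hl)
          rw [hvx] at this
          exact Bool.noConfusion this
        · exact absurd hvl (hdfalse l (hDd l hl hl1) hl2)
    · have hvx : v x = false := hB (Finset.mem_of_mem_erase hyD)
      have hCc : C ≠ c := by
        intro h
        exact hybd (hCd (y, b) (by rw [h]; exact hyc) (hyxp true))
      obtain ⟨l, hl, hvl⟩ := ihC.1 hCc
      by_cases hl1 : l = (x, true)
      · subst hl1
        simp only at hvl
        rw [hvx] at hvl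
        exact Bool.noConfusion hvl
      · by_cases hl2 : l = (y, !b)
        · have := hA (by rw [← hl2]; exact hl)
          rw [hvx] at this
          exact Bool.noConfusion this
        · exact absurd hvl (hdfalse l (hCd l hl hl1) hl2)

/-- a clause `c` of `F` is superredundant in `F` iff
`(F \ {c}) ∪ resolve(c, F) ⊨ c`. -/
theorem superredundant_iff_first_step
    (F : Finset Clause) (hF : IsCNF F) (c : Clause) (hc : c ∈ F) :
    SuperRedundant F c ↔
      entailsC (((↑F : Set Clause) \ {c}) ∪ resolveSets {c} (↑F : Set Clause)) c := by
  constructor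
  · intro hSR v hv
    apply hSR v
    intro d hd
    exact (key_lemma F c v hv hd.1).1 hd.2
  · intro h v hv
    apply h v
    rintro e (⟨heF, hec⟩ | ⟨C, hCmem, D, hDF, hres⟩)
    · exact hv e ⟨ResCn.base heF, hec⟩
    · have hCc : C = c := hCmem
      subst hCc
      rcases hres with hres | hres
      · exact hv e ⟨ResCn.step (ResCn.base hc) (ResCn.base hDF) hres,
          res_ne (res_true_iff.2 hres)⟩
      · exact hv e ⟨ResCn.step (ResCn.base hDF) (ResCn.base hc) hres,
          res_ne (res_false_iff.2 hres)⟩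
end

section
/- Let l be a literal whose complement ¬l occurs in no clause of the CNF formula F, let c ∈ F be a clause with l ∉ c, and let c' ∈ F be a clause with l ∈ c'. Then c is superredundant in F if and only if c is superredundant in F \ {c'}. -/
/-- Monotonicity of resolution closure. -/
lemma ResCn_mono {F G : Finset Clause} (h : F ⊆ G) {d : Clause} (hd : ResCn F d) :
    ResCn G d := by
  induction hd with
  | base hb => exact ResCn.base (h hb)
  | step _ _ hr ih1 ih2 => exact ResCn.step ih1 ih2 hr

/-- The complement of a pure literal never appears in the resolution closure. -/
lemma negLit_not_mem_ResCn {F : Finset Clause} {l : Lit}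
    (hpure : ∀ d ∈ F, negLit l ∉ d) {d : Clause} (hd : ResCn F d) : negLit l ∉ d := by
  induction hd with
  | base hb => exact hpure _ hb
  | step _ _ hr ih1 ih2 =>
    obtain ⟨x, c₁, c₂, _, _, _, _, _, hC, hD, hE⟩ := hr
    subst hC hD hE
    intro hmem
    rcases Finset.mem_union.mp hmem with h | h
    · exact ih1 (Finset.mem_insert_of_mem h)
    · exact ih2 (Finset.mem_insert_of_mem h)

/-- Clauses in the closure not containing the pure literal are derived without
any clause containing it. -/
lemma ResCn_erase_of_not_mem {F : Finset Clause} {l : Lit}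
    (hpure : ∀ d ∈ F, negLit l ∉ d) {c' : Clause} (hlc' : l ∈ c')
    {d : Clause} (hd : ResCn F d) (hld : l ∉ d) : ResCn (F.erase c') d := by
  induction hd with
  | base hb =>
    refine ResCn.base (Finset.mem_erase.mpr ⟨?_, hb⟩)
    rintro rfl; exact hld hlc'
  | @step C D E hC hD hr ih1 ih2 =>
    obtain ⟨x, c₁, c₂, _, _, _, _, _, hCe, hDe, hEe⟩ := hr
    have hlC : l ∉ C := by
      subst hCe; intro h
      rcases Finset.mem_insert.mp h with h | h
      · have : negLit l ∈ D := by
          subst hDe h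
          exact Finset.mem_insert_self _ _
        exact negLit_not_mem_ResCn hpure hD this
      · exact hld (hEe ▸ Finset.mem_union_left _ h)
    have hlD : l ∉ D := by
      subst hDe; intro h
      rcases Finset.mem_insert.mp h with h | h
      · have : negLit l ∈ C := by
          subst hCe
          have : negLit l = (x, true) := by
            rw [h]; simp [negLit]
          rw [this]; exact Finset.mem_insert_self _ _
        exact negLit_not_mem_ResCn hpure hC this
      · exact hld (hEe ▸ Finset.mem_union_right _ h)
    exact ResCn.step (ih1 hlC) (ih2 hlD)
      ⟨x, c₁, c₂, by assumption, by assumption, by assumption, by assumption,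
        by assumption, hCe, hDe, hEe⟩

/-- Satisfaction of a clause avoiding variable of `l` is unchanged by flipping `l`. -/
lemma satClause_update {v : ℕ → Bool} {l : Lit} {d : Clause}
    (h1 : l ∉ d) (h2 : negLit l ∉ d) :
    satClause (fun n => if n = l.1 then l.2 else v n) d ↔ satClause v d := by
  have key : ∀ m ∈ d, m.1 ≠ l.1 := by
    intro m hm hme
    by_cases hb : m.2 = l.2
    · have : l = m := Prod.ext hme.symm hb.symm
      exact h1 (this ▸ hm)
    · have : negLit l = m := by
        refine Prod.ext hme.symm ?_
        show (!l.2) = m.2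
        cases hml : m.2 <;> cases hll : l.2 <;> simp_all
      exact h2 (this ▸ hm)
  constructor
  · rintro ⟨m, hm, hv⟩
    refine ⟨m, hm, ?_⟩
    simpa [if_neg (key m hm)] using hv
  · rintro ⟨m, hm, hv⟩
    exact ⟨m, hm, by simp [if_neg (key m hm), hv]⟩

/-- if `¬l` occurs in no clause of `F`, `l ∉ c ∈ F` and `l ∈ c' ∈ F`, then
`c` is superredundant in `F` iff it is superredundant in `F \ {c'}`. -/
theorem superredundant_drop_pure_clause
    (F : Finset Clause) (hF : IsCNF F) (l : Lit)
    (hpure : ∀ d ∈ F, negLit l ∉ d)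
    (c : Clause) (hc : c ∈ F) (hlc : l ∉ c)
    (c' : Clause) (hc' : c' ∈ F) (hlc' : l ∈ c') :
    SuperRedundant F c ↔ SuperRedundant (F.erase c') c := by
  constructor
  · intro hSR v hv
    -- make l true
    set v' : ℕ → Bool := fun n => if n = l.1 then l.2 else v n with hv'
    have hvl : v' l.1 = l.2 := by simp [hv']
    have hsat : satSet v' ({d | ResCn F d} \ {c}) := by
      rintro d ⟨hdR, hdc⟩
      by_cases hld : l ∈ d
      · exact ⟨l, hld, hvl⟩
      · have hde : ResCn (F.erase c') d := ResCn_erase_of_not_mem hpure hlc' hdR hld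
        have hnd : negLit l ∉ d := negLit_not_mem_ResCn hpure hdR
        exact (satClause_update hld hnd).mpr (hv d ⟨hde, hdc⟩)
    have := hSR v' hsat
    exact (satClause_update hlc (hpure c hc)).mp this
  · intro hSR v hv
    apply hSR v
    rintro d ⟨hdR, hdc⟩
    exact hv d ⟨ResCn_mono (Finset.erase_subset _ _) hdR, hdc⟩
end

section
/- Let F be a CNF formula, c a clause of F, and c' a clause with c' ⊊ c such that F ⊨ c'. Then c is superredundant in F. -/
/-- if `F` entails a strict subclause of its clause `c`, then `c` is
superredundant in `F`. -/
theorem superredundant_of_entailed_strict_subclause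
    (F : Finset Clause) (hF : IsCNF F) (c : Clause) (hc : c ∈ F)
    (c' : Clause) (hsub : c' ⊂ c) (hent : entailsC (↑F : Set Clause) c') :
    SuperRedundant F c := by
  intro v hv
  by_contra hvc
  obtain ⟨l, hlc, hlc'⟩ := Finset.exists_of_ssubset hsub
  obtain ⟨x, b⟩ := l
  have hcNT : NonTauto c := hF c hc
  have hvfalse : ∀ m ∈ c, v m.1 ≠ m.2 := by
    intro m hm hvm
    exact hvc ⟨m, hm, hvm⟩
  have hvx : v x = !b := by
    have h1 : v x ≠ b := hvfalse (x, b) hlc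
    cases b <;> simp_all
  set v' : ℕ → Bool := Function.update v x b with hv'def
  have hv'x : v' x = b := Function.update_self x b v
  have hv'ne : ∀ y, y ≠ x → v' y = v y := fun y hy => Function.update_of_ne hy b v
  have hxc' : ∀ b' : Bool, (x, b') ∉ c' := by
    intro b' hb'
    have hbc : (x, b') ∈ c := hsub.1 hb'
    by_cases hbb : b' = b
    · exact hlc' (hbb ▸ hb')
    · have hb'' : b' = !b := by revert hbb; cases b <;> cases b' <;> decide
      subst hb''
      exact hcNT (x, !b) hbc (by simpa [negLit] using hlc)
  have hnotF : ¬ satSet v' (↑F : Set Clause) := by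
    intro h
    obtain ⟨m, hm, hvm⟩ := hent v' h
    have hmx : m.1 ≠ x := by
      intro he
      exact hxc' m.2 (by rw [← he]; exact hm)
    exact hvfalse m (hsub.1 hm) (by rw [← hv'ne m.1 hmx]; exact hvm)
  rw [satSet] at hnotF
  push_neg at hnotF
  obtain ⟨D, hDF, hvD'⟩ := hnotF
  have hDF' : D ∈ F := hDF
  have hDNT : NonTauto D := hF D hDF'
  have hDc : D ≠ c := by
    intro he
    subst he
    exact hvD' ⟨(x, b), hlc, hv'x⟩
  have hvD : satClause v D := hv D ⟨ResCn.base hDF', hDc⟩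
  have hDfalse : ∀ m ∈ D, m ≠ (x, !b) → v m.1 ≠ m.2 := by
    intro m hm hmne hvm
    by_cases hmx : m.1 = x
    · apply hmne
      have h2 : m.2 = !b := by rw [← hvm, hmx, hvx]
      exact Prod.ext hmx h2
    · exact hvD' ⟨m, hm, by rw [hv'ne m.1 hmx]; exact hvm⟩
  have hxbD : (x, !b) ∈ D := by
    obtain ⟨m, hm, hvm⟩ := hvD
    by_contra hnb
    by_cases hme : m = (x, !b)
    · exact hnb (hme ▸ hm)
    · exact hDfalse m hm hme hvm
  set c₁ : Clause := c.erase (x, b) with hc₁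
  set c₂ : Clause := D.erase (x, !b) with hc₂
  set E : Clause := c₁ ∪ c₂ with hE
  have hEfalse : ∀ m ∈ E, v m.1 ≠ m.2 := by
    intro m hm
    rcases Finset.mem_union.mp hm with h | h
    · exact hvfalse m (Finset.mem_of_mem_erase h)
    · exact hDfalse m (Finset.mem_of_mem_erase h) (Finset.ne_of_mem_erase h)
  have hENT : NonTauto E := by
    intro m hm hnm
    have h1 := hEfalse m hm
    have h2 := hEfalse (negLit m) hnm
    simp [negLit] at h2
    cases hb : v m.1
    · cases hm2 : m.2 <;> simp_all
    · cases hm2 : m.2 <;> simp_all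
  have hcE : c = insert (x, b) c₁ := (Finset.insert_erase hlc).symm
  have hDE : D = insert (x, !b) c₂ := (Finset.insert_erase hxbD).symm
  have hxc₁ : ∀ b', (x, b') ∉ c₁ := by
    intro b' hb'
    by_cases hbb : b' = b
    · subst hbb; exact Finset.notMem_erase _ _ hb'
    · have hb'' : b' = !b := by revert hbb; cases b <;> cases b' <;> decide
      subst hb''
      exact hcNT (x, b) hlc (by simpa [negLit] using Finset.mem_of_mem_erase hb')
  have hxc₂ : ∀ b', (x, b') ∉ c₂ := by
    intro b' hb'
    by_cases hbb : b' = !b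
    · subst hbb; exact Finset.notMem_erase _ _ hb'
    · have hb'' : b' = b := by revert hbb; cases b <;> cases b' <;> decide
      rw [hb''] at hb'
      exact hDNT (x, !b) hxbD (by simpa [negLit] using Finset.mem_of_mem_erase hb')
  have hEc : E ≠ c := by
    intro he
    have hmem : (x, b) ∈ E := he ▸ hlc
    rcases Finset.mem_union.mp hmem with h | h
    · exact hxc₁ b h
    · exact hxc₂ b h
  have hRes : ResCn F E := by
    cases b with
    | true =>
      refine ResCn.step (ResCn.base hc) (ResCn.base hDF') ?_
      refine ⟨x, c₁, c₂, hxc₁ true, ?_, ?_, ?_, hENT, hcE, ?_, rfl⟩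
      · simpa using hxc₂ false
      · rw [← hcE]; exact hcNT
      · rw [show insert (x, false) c₂ = D by simpa using hDE.symm]; exact hDNT
      · simpa using hDE
    | false =>
      refine ResCn.step (ResCn.base hDF') (ResCn.base hc) ?_
      refine ⟨x, c₂, c₁, ?_, hxc₁ false, ?_, ?_, ?_, ?_, hcE, ?_⟩
      · simpa using hxc₂ true
      · rw [show insert (x, true) c₂ = D by simpa using hDE.symm]; exact hDNT
      · rw [← hcE]; exact hcNT
      · rw [Finset.union_comm]; exact hENT
      · simpa using hDE
      · rw [Finset.union_comm]
  obtain ⟨m, hm, hvm⟩ := hv E ⟨hRes, hEc⟩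
  exact hEfalse m hm hvm
end

section
/- If a clause c of the CNF formula F is superredundant in F, then for any clause c', the clause c is also superredundant in F ∪ {c'}. -/
/-- a superredundant clause of `F` stays superredundant after adding any
clause to `F`. -/
theorem superredundant_insert
    (F : Finset Clause) (hF : IsCNF F) (c : Clause) (hc : c ∈ F)
    (hsr : SuperRedundant F c) (c' : Clause) (hc' : NonTauto c') :
    SuperRedundant (insert c' F) c := by
  intro v hv
  apply hsr v
  intro d hd
  apply hv
  refine ⟨?_, hd.2⟩
  have mono : ∀ e, ResCn F e → ResCn (insert c' F) e := by
    intro e he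
    induction he with
    | base h => exact ResCn.base (Finset.mem_insert_of_mem h)
    | step _ _ hres ih1 ih2 => exact ResCn.step ih1 ih2 hres
  exact mono d hd.1
end

section
/- Let F be a CNF formula containing the clause c₁ ∪ c₂ (where c₁ and c₂ are clauses) and let x be a variable not occurring in F. Then F expresses forgetting x from the formula (F \ {c₁ ∪ c₂}) ∪ {c₁ ∪ {x}, c₂ ∪ {¬x}}: x does not occur in F, and for every formula C in which x does not occur, F ⊨ C holds if and only if (F \ {c₁ ∪ c₂}) ∪ {c₁ ∪ {x}, c₂ ∪ {¬x}} ⊨ C holds. -/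
lemma satClause_congr (v v' : ℕ → Bool) (c : Clause)
    (h : ∀ l ∈ c, v l.1 = v' l.1) : satClause v c → satClause v' c := by
  rintro ⟨l, hl, hv⟩
  exact ⟨l, hl, (h l hl).symm.trans hv⟩

/-- splitting a clause `c₁ ∪ c₂` of `F` into `c₁ ∪ {x}` and `c₂ ∪ {¬x}`
over a variable `x` not occurring in `F` preserves the semantics: `F` expresses
forgetting `x` from the resulting formula. -/
theorem split_expresses_forgetting
    (F : Finset Clause) (hF : IsCNF F) (c₁ c₂ : Clause)
    (h₁ : NonTauto c₁) (h₂ : NonTauto c₂)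
    (hmem : c₁ ∪ c₂ ∈ F) (x : ℕ) (hx : x ∉ varsF F) :
    x ∉ varsF F ∧
    ∀ C : Finset Clause, IsCNF C → x ∉ varsF C →
      (entailsF F C ↔
       entailsF ((F.erase (c₁ ∪ c₂)) ∪
         {insert (x, true) c₁, insert (x, false) c₂}) C) := by
  classical
  have hxF : ∀ c ∈ F, ∀ b : Bool, (x, b) ∉ c := by
    intro c hc b hb
    exact hx ⟨c, hc, b, hb⟩
  refine ⟨hx, ?_⟩
  intro C hC hxC
  constructor
  · -- F ⊨ C → F' ⊨ C
    intro hFC v hv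
    apply hFC
    intro c hc
    by_cases hce : c = c₁ ∪ c₂
    · subst hce
      have hA : satClause v (insert (x, true) c₁) :=
        hv _ (by simp [Finset.mem_union])
      have hB : satClause v (insert (x, false) c₂) :=
        hv _ (by simp [Finset.mem_union])
      cases hvx : v x with
      | true =>
        obtain ⟨l, hl, hvl⟩ := hB
        rcases Finset.mem_insert.mp hl with rfl | hl
        · simp [hvx] at hvl
        · exact ⟨l, Finset.mem_union_right _ hl, hvl⟩
      | false =>
        obtain ⟨l, hl, hvl⟩ := hA
        rcases Finset.mem_insert.mp hl with rfl | hl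
        · simp [hvx] at hvl
        · exact ⟨l, Finset.mem_union_left _ hl, hvl⟩
    · exact hv c (by simp [Finset.mem_union, Finset.mem_erase, hce, hc])
  · -- F' ⊨ C → F ⊨ C
    intro hF'C v hv
    have hsplit : satClause v (c₁ ∪ c₂) := hv _ hmem
    set b : Bool := if satClause v c₁ then false else true with hb
    set v' : ℕ → Bool := fun n => if n = x then b else v n with hv'
    have hagree : ∀ c : Clause, (∀ b : Bool, (x, b) ∉ c) →
        ∀ l ∈ c, v l.1 = v' l.1 := by
      intro c hxc l hl
      have hne : l.1 ≠ x := by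
        intro h
        exact hxc l.2 (by rw [← h]; exact hl)
      simp [hv', hne]
    have hv'A : satClause v' (insert (x, true) c₁) := by
      by_cases h1 : satClause v c₁
      · have : satClause v' c₁ :=
          satClause_congr v v' c₁
            (hagree c₁ (fun bb hbb => hxF _ hmem bb (Finset.mem_union_left _ hbb))) h1
        obtain ⟨l, hl, hvl⟩ := this
        exact ⟨l, Finset.mem_insert_of_mem hl, hvl⟩
      · exact ⟨(x, true), Finset.mem_insert_self _ _, by simp [hv', hb, h1]⟩
    have hv'B : satClause v' (insert (x, false) c₂) := by
      by_cases h1 : satClause v c₁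
      · exact ⟨(x, false), Finset.mem_insert_self _ _, by simp [hv', hb, h1]⟩
      · have h2 : satClause v c₂ := by
          obtain ⟨l, hl, hvl⟩ := hsplit
          rcases Finset.mem_union.mp hl with hl | hl
          · exact absurd ⟨l, hl, hvl⟩ h1
          · exact ⟨l, hl, hvl⟩
        have : satClause v' c₂ :=
          satClause_congr v v' c₂
            (hagree c₂ (fun bb hbb => hxF _ hmem bb (Finset.mem_union_right _ hbb))) h2
        obtain ⟨l, hl, hvl⟩ := this
        exact ⟨l, Finset.mem_insert_of_mem hl, hvl⟩
    have hv'F' : satSet v'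
        (↑((F.erase (c₁ ∪ c₂)) ∪ {insert (x, true) c₁, insert (x, false) c₂}) : Set Clause) := by
      intro c hc
      rw [Finset.mem_coe, Finset.mem_union] at hc
      rcases hc with hc | hc
      · have hcF : c ∈ F := Finset.mem_of_mem_erase hc
        exact satClause_congr v v' c (hagree c (hxF c hcF)) (hv c hcF)
      · rcases Finset.mem_insert.mp hc with rfl | hc
        · exact hv'A
        · rw [Finset.mem_singleton] at hc
          subst hc
          exact hv'B
    have hv'C : satSet v' (↑C : Set Clause) := hF'C v' hv'F'
    intro c hc
    have hxc : ∀ b : Bool, (x, b) ∉ c := fun bb hbb => hxC ⟨c, hc, bb, hbb⟩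
    exact satClause_congr v' v c
      (fun l hl => (hagree c hxc l hl).symm) (hv'C c hc)
end
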